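/- arXiv:1511.08383 — 5 statements merged into one kernel-verified Lean document; each statement's English description precedes it below -/
import Mathlib

section
/- Let k ≥ 1, μ ∈ {0, 1, 2}, n = 3k + μ, and let d_2, d_3, d_5, d_7, ... be non-negative integers satisfying: (i) μ ≥ 2(d_2 + d_5) + Σ_{j≥3} 2(j-1)·d_{2j+1}, and (ii) n = Σ_{j≥1} (2j+1)·d_{2j+1} - d_2. Then μ ≠ 1, and: if μ = 0 then d_3 = k and all other d_j vanish; if μ = 2 then either (d_2, d_5) = (0, 1) with d_3 = k - 1 and all other d_j zero, or (d_2, d_5) = (1, 0) with d_3 = k + 1 and all other d_j zero. -/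
/-- Combinatorial content of Lemma 4.2: for `n = 3k + μ`, `μ ∈ {0,1,2}`, the
dimensions `d j` of the rational homotopy groups (with `d 0 = d 1 = 0`, only
`d 2` possibly nonzero in even degrees, finite support bounded by `M`)
satisfying the inequality `2(d 2 + d 5) + ∑_{j≥3} 2(j-1) d_{2j+1} ≤ μ` and the
Friedlander–Halperin equality `n = ∑_{j≥1} (2j+1) d_{2j+1} - d 2` force the
stated possibilities. -/
theorem stmt_5 (k μ n : ℕ) (d : ℕ → ℕ) (hk : 1 ≤ k)
    (hμ : μ ∈ ({0, 1, 2} : Set ℕ)) (hn : n = 3 * k + μ)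
    (hd0 : d 0 = 0) (hd1 : d 1 = 0) (heven : ∀ j, 2 ≤ j → d (2 * j) = 0)
    (M : ℕ) (hM : ∀ j, M ≤ j → d j = 0)
    (hineq : ∀ m : ℕ,
      2 * (d 2 + d 5) + ∑ j ∈ Finset.Icc 3 m, 2 * (j - 1) * d (2 * j + 1) ≤ μ)
    (heq : n + d 2 = ∑ j ∈ Finset.Icc 1 M, (2 * j + 1) * d (2 * j + 1)) :
    μ ≠ 1 ∧
      (μ = 0 → d 3 = k ∧ ∀ j, j ≠ 3 → d j = 0) ∧
      (μ = 2 →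
        (d 2 = 0 ∧ d 5 = 1 ∧ d 3 = k - 1 ∧ ∀ j, j ≠ 3 → j ≠ 5 → d j = 0) ∨
        (d 2 = 1 ∧ d 5 = 0 ∧ d 3 = k + 1 ∧ ∀ j, j ≠ 2 → j ≠ 3 → d j = 0)) := by
  simp only [Set.mem_insert_iff, Set.mem_singleton_iff] at hμ
  have hμ2 : μ ≤ 2 := by omega
  -- all d (2j+1) with j ≥ 3 vanish
  have hbig : ∀ j, 3 ≤ j → d (2 * j + 1) = 0 := by
    intro j hj
    have h := hineq j
    have hmem : j ∈ Finset.Icc 3 j := by simp [hj]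
    have hsingle := Finset.single_le_sum
      (f := fun i => 2 * (i - 1) * d (2 * i + 1)) (fun i _ => Nat.zero_le _) hmem
    have h1 : 2 * (j - 1) * d (2 * j + 1) ≤ 2 :=
      le_trans (hsingle.trans (le_trans (Nat.le_add_left _ _) h)) hμ2
    have h2 : 4 * d (2 * j + 1) ≤ 2 * (j - 1) * d (2 * j + 1) :=
      Nat.mul_le_mul_right _ (by omega)
    omega
  -- everything except possibly d 2, d 3, d 5 vanishes
  have hzero : ∀ i, i ≠ 2 → i ≠ 3 → i ≠ 5 → d i = 0 := by
    intro i h2 h3 h5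
    rcases Nat.even_or_odd i with ⟨j, hj⟩ | ⟨j, hj⟩
    · have : j = 0 ∨ j = 1 ∨ 2 ≤ j := by omega
      rcases this with rfl | rfl | hge
      · simpa [hj] using hd0
      · omega
      · rw [hj, ← two_mul]; exact heven j hge
    · have : j = 0 ∨ j = 1 ∨ j = 2 ∨ 3 ≤ j := by omega
      rcases this with rfl | rfl | rfl | hge
      · simpa [hj] using hd1
      · omega
      · omega
      · rw [hj]; exact hbig j hge
  -- the sum is 3 d3 + 5 d5
  have hsum : n + d 2 = 3 * d 3 + 5 * d 5 := by
    rw [heq]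
    have hsub : ∑ j ∈ Finset.Icc 1 M, (2 * j + 1) * d (2 * j + 1)
        = ∑ j ∈ Finset.Icc 1 (M + 3), (2 * j + 1) * d (2 * j + 1) := by
      refine Finset.sum_subset (Finset.Icc_subset_Icc_right (by omega)) ?_
      intro x hx hx'
      simp only [Finset.mem_Icc] at hx hx'
      have : d (2 * x + 1) = 0 := hM _ (by omega)
      simp [this]
    rw [hsub]
    have hIcc : Finset.Icc 1 (M + 3) = Finset.Ioc 0 (M + 3) := by
      ext x; simp [Nat.lt_iff_add_one_le]
    rw [hIcc, ← Finset.sum_Ioc_consecutive _ (Nat.zero_le 2) (by omega : 2 ≤ M + 3)]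
    have htail : ∑ j ∈ Finset.Ioc 2 (M + 3), (2 * j + 1) * d (2 * j + 1) = 0 := by
      refine Finset.sum_eq_zero fun j hj => ?_
      simp only [Finset.mem_Ioc] at hj
      rw [hbig j (by omega)]; ring
    have hhead : Finset.Ioc 0 2 = ({1, 2} : Finset ℕ) := by decide
    rw [htail, hhead]
    norm_num
  have hineq0 : 2 * (d 2 + d 5) ≤ μ := by simpa using hineq 0
  refine ⟨?_, ?_, ?_⟩
  · rintro rfl
    omega
  · rintro rfl
    refine ⟨by omega, fun j hj => ?_⟩
    by_cases h2 : j = 2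
    · subst h2; omega
    by_cases h5 : j = 5
    · subst h5; omega
    exact hzero j h2 hj h5
  · rintro rfl
    have hcase : (d 2 = 0 ∧ d 5 = 1) ∨ (d 2 = 1 ∧ d 5 = 0) := by omega
    rcases hcase with ⟨h2, h5⟩ | ⟨h2, h5⟩
    · left
      refine ⟨h2, h5, by omega, fun j hj3 hj5 => ?_⟩
      by_cases h2' : j = 2
      · subst h2'; exact h2
      exact hzero j h2' hj3 hj5
    · right
      refine ⟨h2, h5, by omega, fun j hj2 hj3 => ?_⟩
      by_cases h5' : j = 5
      · subst h5'; exact h5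
      exact hzero j hj2 hj3 h5'
end

section
/- Let a_i, b_i, k_i, l_i (i = 1, ..., N) be integers defining a linear T² action on a product of N 3-spheres. The action is free if and only if for every choice of pairs (c_i, m_i) ∈ {(a_i, k_i), (b_i, l_i)} for each i, the collection of 2×2 determinants c_i·m_j - c_j·m_i over all 1 ≤ i < j ≤ N has greatest common divisor 1. -/
open Complex

private lemma zpow_gcd2' {z : ℂ} (hz : z ≠ 0) {x y : ℤ} (hx : z ^ x = 1) (hy : z ^ y = 1) :
    z ^ (gcd x y) = 1 := by
  have h : (gcd x y : ℤ) = x * Int.gcdA x y + y * Int.gcdB x y := by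
    rw [← Int.gcd_eq_gcd_ab, Int.coe_gcd]
  rw [h, zpow_add₀ hz, zpow_mul, zpow_mul, hx, hy, one_zpow, one_zpow, one_mul]

private lemma zpow_finset_gcd' {z : ℂ} (hz : z ≠ 0) {α : Type*} [DecidableEq α] (S : Finset α)
    (f : α → ℤ) (h : ∀ d ∈ S, z ^ f d = 1) : z ^ (S.gcd f) = 1 := by
  induction S using Finset.induction_on with
  | empty => simp
  | insert _ _ hx ih =>
    rw [Finset.gcd_insert]
    exact zpow_gcd2' hz (h _ (Finset.mem_insert_self _ _))
      (ih fun d hd => h d (Finset.mem_insert_of_mem hd))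

private noncomputable def zz' (s p : ℤ) : ℂ := Complex.exp ((((2 * Real.pi * s / p : ℝ)) : ℂ) * I)

private lemma zz_abs' (s p : ℤ) : ‖zz' s p‖ = 1 := Complex.norm_exp_ofReal_mul_I _

private lemma zz_pow_mul' (c m s t : ℤ) {p : ℤ} (hp : p ≠ 0) (h : p ∣ c * s + m * t) :
    zz' s p ^ c * zz' t p ^ m = 1 := by
  obtain ⟨n, hn⟩ := h
  have key : (c : ℂ) * s + m * t = p * n := by exact_mod_cast hn
  have hpc : (p : ℂ) ≠ 0 := Int.cast_ne_zero.mpr hp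
  rw [zz', zz', ← Complex.exp_int_mul, ← Complex.exp_int_mul, ← Complex.exp_add]
  rw [show (c : ℂ) * ((((2 * Real.pi * s / p : ℝ)) : ℂ) * I) +
      (m : ℂ) * ((((2 * Real.pi * t / p : ℝ)) : ℂ) * I) = (n : ℂ) * (2 * Real.pi * I) by
    push_cast
    field_simp
    linear_combination key]
  exact_mod_cast Complex.exp_int_mul_two_pi_mul_I n

private lemma zz_eq_one' {s p : ℤ} (hp : p ≠ 0) (h : zz' s p = 1) : p ∣ s := by
  rw [zz', Complex.exp_eq_one_iff] at h
  obtain ⟨n, hn⟩ := h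
  have h2 : (((2 * Real.pi * s / p : ℝ)) : ℂ) = ((n * (2 * Real.pi) : ℝ) : ℂ) := by
    apply mul_right_cancel₀ I_ne_zero
    rw [hn]; push_cast; ring
  have h3 : 2 * Real.pi * s / p = n * (2 * Real.pi) := Complex.ofReal_injective h2
  have hpr : (p : ℝ) ≠ 0 := Int.cast_ne_zero.mpr hp
  have hs : (s : ℝ) = p * n := by
    field_simp at h3
    nlinarith [Real.pi_ne_zero, Real.pi_pos, h3]
  exact ⟨n, by exact_mod_cast hs⟩

/-- Freeness criterion for the linear `T²` action on `∏_{i=1}^N S³` with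
weights `(a_i, k_i)` and `(b_i, l_i)`: a point `(z,w)` of the torus fixes some
point of the product iff for each `i` one of `z^{a_i} w^{k_i} = 1` or
`z^{b_i} w^{l_i} = 1` holds; the action is free iff for every choice
`(c_i, m_i) ∈ {(a_i, k_i), (b_i, l_i)}` the determinants
`c_i m_j - c_j m_i`, `1 ≤ i < j ≤ N`, have gcd `1`. -/
theorem stmt_7 (N : ℕ) (hN : 1 ≤ N) (a b k l : Fin N → ℤ) :
    (∀ z w : ℂ, ‖z‖ = 1 → ‖w‖ = 1 →
        (∀ i, z ^ a i * w ^ k i = 1 ∨ z ^ b i * w ^ l i = 1) →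
        z = 1 ∧ w = 1) ↔
      (∀ c m : Fin N → ℤ,
        (∀ i, (c i, m i) = (a i, k i) ∨ (c i, m i) = (b i, l i)) →
        Finset.gcd
          ((Finset.univ ×ˢ Finset.univ).filter
            (fun p : Fin N × Fin N => p.1 < p.2))
          (fun p => c p.1 * m p.2 - c p.2 * m p.1) = 1) := by
  classical
  set S := ((Finset.univ ×ˢ Finset.univ).filter
    (fun p : Fin N × Fin N => p.1 < p.2)) with hS
  constructor
  · -- freeness ⇒ gcd condition
    intro hfree c m hcm
    by_contra hg
    set g := S.gcd (fun p => c p.1 * m p.2 - c p.2 * m p.1) with hgdef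
    -- find a prime dividing all determinants
    obtain ⟨p, hp_prime, hpdvd⟩ :
        ∃ p : ℤ, Prime p ∧ ∀ q ∈ S, p ∣ (c q.1 * m q.2 - c q.2 * m q.1) := by
      by_cases h0 : g = 0
      · refine ⟨2, Int.prime_two, fun q hq => ?_⟩
        have := (Finset.gcd_eq_zero_iff.mp h0) q hq
        simp [this]
      · have hnorm : g = |g| := by
          rw [Int.abs_eq_normalize, hgdef, Finset.normalize_gcd]
        have hna : g.natAbs ≠ 1 := by
          intro h1
          apply hg
          rw [hgdef] at hnorm ⊢
          rw [hnorm, Int.abs_eq_natAbs, h1]; rfl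
        obtain ⟨p, hp, hdvd⟩ := Int.exists_prime_and_dvd hna
        exact ⟨p, hp, fun q hq => hdvd.trans (Finset.gcd_dvd hq)⟩
    have hp0 : p ≠ 0 := hp_prime.ne_zero
    -- divisibility for all pairs
    have hall : ∀ i j : Fin N, p ∣ c i * m j - c j * m i := by
      intro i j
      rcases lt_trichotomy i j with h | h | h
      · exact hpdvd (i, j) (by simp [hS, h])
      · simp [h]
      · have h2 := hpdvd (j, i) (by simp [hS, h])
        have := dvd_neg.mpr h2
        simpa [neg_sub] using this
    -- find (s,t) not both ≡ 0 mod p with c i s + m i t ≡ 0 mod p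
    obtain ⟨s, t, hns, hst⟩ :
        ∃ s t : ℤ, ¬(p ∣ s ∧ p ∣ t) ∧ ∀ i, p ∣ c i * s + m i * t := by
      by_cases hex : ∃ i₀, ¬(p ∣ c i₀ ∧ p ∣ m i₀)
      · obtain ⟨i₀, hi₀⟩ := hex
        refine ⟨m i₀, -c i₀, ?_, fun i => ?_⟩
        · rw [dvd_neg]; tauto
        · have := hall i i₀
          have h2 : c i * m i₀ + m i * (-c i₀) = c i * m i₀ - c i₀ * m i := by ring
          rw [h2]; exact this
      · push_neg at hex
        refine ⟨1, 0, ?_, fun i => ?_⟩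
        · intro ⟨h1, _⟩; exact hp_prime.not_dvd_one h1
        · simpa using (hex i).1
    -- construct the counterexample point
    have hmain := hfree (zz' s p) (zz' t p) (zz_abs' _ _) (zz_abs' _ _) (fun i => by
      rcases hcm i with h | h <;> rw [Prod.mk.injEq] at h
      · left; rw [← h.1, ← h.2]; exact zz_pow_mul' _ _ _ _ hp0 (hst i)
      · right; rw [← h.1, ← h.2]; exact zz_pow_mul' _ _ _ _ hp0 (hst i))
    exact hns ⟨zz_eq_one' hp0 hmain.1, zz_eq_one' hp0 hmain.2⟩
  · -- gcd condition ⇒ freeness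
    intro hgcd z w hz hw hsol
    have hz0 : z ≠ 0 := by intro h; rw [h] at hz; simp at hz
    have hw0 : w ≠ 0 := by intro h; rw [h] at hw; simp at hw
    set c : Fin N → ℤ := fun i => if z ^ a i * w ^ k i = 1 then a i else b i with hc
    set m : Fin N → ℤ := fun i => if z ^ a i * w ^ k i = 1 then k i else l i with hm
    have hcm : ∀ i, (c i, m i) = (a i, k i) ∨ (c i, m i) = (b i, l i) := fun i => by
      by_cases h : z ^ a i * w ^ k i = 1 <;> simp [hc, hm, h]
    have hone : ∀ i, z ^ c i * w ^ m i = 1 := fun i => by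
      by_cases h : z ^ a i * w ^ k i = 1
      · simp only [hc, hm, if_pos h]; exact h
      · simp only [hc, hm, if_neg h]
        rcases hsol i with h' | h'
        · exact absurd h' h
        · exact h'
    have hg := hgcd c m hcm
    have hdetz : ∀ q ∈ S, z ^ (c q.1 * m q.2 - c q.2 * m q.1) = 1 := by
      intro q _
      obtain ⟨i, j⟩ := q
      have h1 : z ^ (c i * m j - c j * m i) =
          (z ^ c i * w ^ m i) ^ (m j) * (z ^ c j * w ^ m j) ^ (-(m i)) := by
        rw [mul_zpow, mul_zpow, ← zpow_mul z, ← zpow_mul w, ← zpow_mul z, ← zpow_mul w,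
          mul_mul_mul_comm, ← zpow_add₀ hz0, ← zpow_add₀ hw0,
          show c i * m j + c j * (-(m i)) = c i * m j - c j * m i by ring,
          show m i * m j + m j * (-(m i)) = 0 by ring, zpow_zero, mul_one]
      rw [h1, hone i, hone j, one_zpow, one_zpow, one_mul]
    have hdetw : ∀ q ∈ S, w ^ (c q.1 * m q.2 - c q.2 * m q.1) = 1 := by
      intro q _
      obtain ⟨i, j⟩ := q
      have h1 : w ^ (c i * m j - c j * m i) =
          (z ^ c i * w ^ m i) ^ (-(c j)) * (z ^ c j * w ^ m j) ^ (c i) := by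
        rw [mul_zpow, mul_zpow, ← zpow_mul z, ← zpow_mul w, ← zpow_mul z, ← zpow_mul w,
          mul_mul_mul_comm, ← zpow_add₀ hz0, ← zpow_add₀ hw0,
          show c i * (-(c j)) + c j * c i = 0 by ring,
          show m i * (-(c j)) + m j * c i = c i * m j - c j * m i by ring,
          zpow_zero, one_mul]
      rw [h1, hone i, hone j, one_zpow, one_zpow, one_mul]
    have hz1 := zpow_finset_gcd' hz0 S _ hdetz
    have hw1 := zpow_finset_gcd' hw0 S _ hdetw
    rw [hg, zpow_one] at hz1 hw1
    exact ⟨hz1, hw1⟩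
end

section
/- Let N ≥ 2 and let a_i, b_i, k_i, l_i ∈ ℤ (i = 1,...,N) satisfy: a_1 ≠ 0, k_1 = 0, l_1 ≠ 0, k_2·l_2 ≠ 0, gcd(b_1, l_1) = 1, and the freeness condition: for all choices (c_i, m_i) ∈ {(a_i, k_i), (b_i, l_i)}, gcd over all 1 ≤ i < j ≤ N of the determinants |c_i m_j - c_j m_i| equals 1. Consider the 3×N matrix with columns (a_i b_i, a_i l_i + b_i k_i, k_i l_i)ᵀ; its first column is (b_1·a_1, a_1·l_1, 0)ᵀ (up to scaling by a_1). If this matrix has rank exactly 2, then there exists ε ∈ {±1} such that for all j = 2, ..., N: (b_1·k_j - l_1·a_j)·(b_1·l_j - l_1·b_j) = ε·k_j·l_j. -/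
/-- Lemma 6.3: under the stated normalizations and the freeness condition, if
the 3×N matrix with columns `(a_i b_i, a_i l_i + b_i k_i, k_i l_i)ᵀ` has rank
exactly 2, then there is `ε = ±1` with
`(b₁ k_j - l₁ a_j)(b₁ l_j - l₁ b_j) = ε k_j l_j` for all `j = 2, …, N`. -/
theorem stmt_8 (N : ℕ) (hN : 2 ≤ N) (a b k l : ℕ → ℤ)
    (ha1 : a 1 ≠ 0) (hk1 : k 1 = 0) (hl1 : l 1 ≠ 0) (hk2l2 : k 2 * l 2 ≠ 0)
    (hgcd : Int.gcd (b 1) (l 1) = 1)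
    (hfree : ∀ c m : ℕ → ℤ,
      (∀ i, 1 ≤ i → i ≤ N → (c i, m i) = (a i, k i) ∨ (c i, m i) = (b i, l i)) →
      Finset.gcd
        (((Finset.Icc 1 N) ×ˢ (Finset.Icc 1 N)).filter
          (fun p : ℕ × ℕ => p.1 < p.2))
        (fun p => c p.1 * m p.2 - c p.2 * m p.1) = 1)
    (M : Matrix (Fin 3) (Fin N) ℚ)
    (hM : ∀ r j, M r j =
      ![((a ((j : ℕ) + 1) * b ((j : ℕ) + 1) : ℤ) : ℚ),
        ((a ((j : ℕ) + 1) * l ((j : ℕ) + 1) + b ((j : ℕ) + 1) * k ((j : ℕ) + 1) : ℤ) : ℚ),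
        ((k ((j : ℕ) + 1) * l ((j : ℕ) + 1) : ℤ) : ℚ)] r)
    (hrank : M.rank = 2) :
    ∃ ε : ℤ, (ε = 1 ∨ ε = -1) ∧ ∀ j, 2 ≤ j → j ≤ N →
      (b 1 * k j - l 1 * a j) * (b 1 * l j - l 1 * b j) = ε * (k j * l j) := by
  classical
  -- Step 1: a nonzero functional φ vanishing on all columns
  obtain ⟨φ, hφ0, hφ⟩ : ∃ φ : Fin 3 → ℚ, φ ≠ 0 ∧ Matrix.mulVec M.transpose φ = 0 := by
    have hrankT : Module.finrank ℚ (LinearMap.range M.transpose.mulVecLin) = 2 := by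
      rw [← Matrix.rank, Matrix.rank_transpose]; exact hrank
    have h3 : Module.finrank ℚ (Fin 3 → ℚ) = 3 := by simp
    have hrn := LinearMap.finrank_range_add_finrank_ker M.transpose.mulVecLin
    rw [h3, hrankT] at hrn
    have hkk : LinearMap.ker M.transpose.mulVecLin ≠ ⊥ := by
      intro h
      rw [h, finrank_bot] at hrn
      omega
    obtain ⟨ψ, hψmem, hψ0⟩ := (Submodule.ne_bot_iff _).mp hkk
    exact ⟨ψ, hψ0, by rw [← Matrix.mulVecLin_apply]; exact LinearMap.mem_ker.mp hψmem⟩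
  -- Step 2: column equations
  have hcol : ∀ j, 1 ≤ j → j ≤ N →
      φ 0 * ((a j : ℚ) * (b j : ℚ)) + φ 1 * ((a j : ℚ) * (l j : ℚ) + (b j : ℚ) * (k j : ℚ))
        + φ 2 * ((k j : ℚ) * (l j : ℚ)) = 0 := by
    intro j hj1 hjN
    have hlt : j - 1 < N := by omega
    have h := congrFun hφ ⟨j - 1, hlt⟩
    have hj : ((⟨j - 1, hlt⟩ : Fin N) : ℕ) + 1 = j := by
      simp only []; omega
    simp only [Matrix.mulVec, dotProduct, Fin.sum_univ_three, Matrix.transpose_apply,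
      hM, Matrix.cons_val_zero, Matrix.cons_val_one, Matrix.head_cons, Pi.zero_apply,
      Matrix.cons_val_two, Matrix.tail_cons, hj] at h
    push_cast at h
    linear_combination h
  -- Step 3: use column 1 (where k 1 = 0)
  have h1 : φ 0 * (b 1 : ℚ) + φ 1 * (l 1 : ℚ) = 0 := by
    have h := hcol 1 le_rfl (by omega)
    rw [hk1] at h
    push_cast at h
    have ha1' : (a 1 : ℚ) ≠ 0 := Int.cast_ne_zero.mpr ha1
    have h2 : (a 1 : ℚ) * (φ 0 * (b 1 : ℚ) + φ 1 * (l 1 : ℚ)) = 0 := by linear_combination h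
    rcases mul_eq_zero.mp h2 with h | h
    · exact absurd h ha1'
    · exact h
  have hl1' : (l 1 : ℚ) ≠ 0 := Int.cast_ne_zero.mpr hl1
  have hα : φ 0 ≠ 0 := by
    intro hα0
    have hβ : φ 1 = 0 := by
      rw [hα0, zero_mul, zero_add] at h1
      exact (mul_eq_zero.mp h1).resolve_right hl1'
    have hγ : φ 2 ≠ 0 := by
      intro hγ0
      apply hφ0
      funext i
      fin_cases i <;> simp [hα0, hβ, hγ0]
    have h := hcol 2 (by omega) hN
    rw [hα0, hβ] at h
    simp only [zero_mul, zero_add] at h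
    have hz : (k 2 : ℚ) * (l 2 : ℚ) = 0 := (mul_eq_zero.mp h).resolve_left hγ
    exact hk2l2 (by exact_mod_cast hz)
  -- Step 4: the rational identity
  set εq : ℚ := (φ 0 * (b 1 : ℚ) ^ 2 - (l 1 : ℚ) ^ 2 * φ 2) / φ 0 with hεqdef
  have key : ∀ j, 1 ≤ j → j ≤ N →
      ((b 1 : ℚ) * (k j : ℚ) - (l 1 : ℚ) * (a j : ℚ)) *
        ((b 1 : ℚ) * (l j : ℚ) - (l 1 : ℚ) * (b j : ℚ)) = εq * ((k j : ℚ) * (l j : ℚ)) := by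
    intro j hj1 hjN
    have h := hcol j hj1 hjN
    have hkey0 : φ 0 * (((b 1 : ℚ) * (k j : ℚ) - (l 1 : ℚ) * (a j : ℚ)) *
        ((b 1 : ℚ) * (l j : ℚ) - (l 1 : ℚ) * (b j : ℚ)))
        = (φ 0 * (b 1 : ℚ) ^ 2 - (l 1 : ℚ) ^ 2 * φ 2) * ((k j : ℚ) * (l j : ℚ)) := by
      linear_combination (l 1 : ℚ) ^ 2 * h -
        (l 1 : ℚ) * ((a j : ℚ) * (l j : ℚ) + (b j : ℚ) * (k j : ℚ)) * h1
    rw [hεqdef]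
    field_simp
    linear_combination hkey0
  -- Step 5: integer identity with num/den of εq
  have hdenmul : εq * ((εq.den : ℤ) : ℚ) = (εq.num : ℚ) := by
    exact_mod_cast Rat.mul_den_eq_num εq
  have hint : ∀ j, 1 ≤ j → j ≤ N →
      (εq.den : ℤ) * ((b 1 * k j - l 1 * a j) * (b 1 * l j - l 1 * b j))
        = εq.num * (k j * l j) := by
    intro j hj1 hjN
    have h := key j hj1 hjN
    have h2 : (((εq.den : ℤ) * ((b 1 * k j - l 1 * a j) * (b 1 * l j - l 1 * b j)) : ℤ) : ℚ)
        = ((εq.num * (k j * l j) : ℤ) : ℚ) := by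
      push_cast
      calc ((εq.den : ℚ)) * (((b 1 : ℚ) * (k j : ℚ) - (l 1 : ℚ) * (a j : ℚ)) *
            ((b 1 : ℚ) * (l j : ℚ) - (l 1 : ℚ) * (b j : ℚ)))
          = (εq * ((εq.den : ℤ) : ℚ)) * ((k j : ℚ) * (l j : ℚ)) := by
            rw [h]; push_cast; ring
        _ = (εq.num : ℚ) * ((k j : ℚ) * (l j : ℚ)) := by rw [hdenmul]
    exact_mod_cast h2
  -- helper: p doesn't divide both b 1 and l 1
  have hb_or : ∀ p : ℕ, Nat.Prime p → ¬((p : ℤ) ∣ b 1) ∨ ¬((p : ℤ) ∣ l 1) := by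
    intro p hp
    by_contra hcon
    push_neg at hcon
    have hd : (p : ℤ) ∣ ((Int.gcd (b 1) (l 1) : ℕ) : ℤ) := Int.dvd_coe_gcd hcon.1 hcon.2
    rw [hgcd] at hd
    have : p ∣ 1 := Int.natCast_dvd_natCast.mp (by exact_mod_cast hd)
    exact hp.one_lt.ne' (Nat.dvd_one.mp this)
  -- Step 6: den εq = 1
  have hs1 : εq.den = 1 := by
    by_contra hs
    obtain ⟨p, hp, hpd⟩ := Nat.exists_prime_and_dvd hs
    have hpint : Prime (p : ℤ) := Nat.prime_iff_prime_int.mp hp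
    have hpk : ∀ j, 1 ≤ j → j ≤ N → (p : ℤ) ∣ k j * l j := by
      intro j hj1 hjN
      have h := hint j hj1 hjN
      have hps : (p : ℤ) ∣ (εq.den : ℤ) := Int.natCast_dvd_natCast.mpr hpd
      have h2 : (p : ℤ) ∣ εq.num * (k j * l j) := h ▸ hps.mul_right _
      have hcop : ¬ (p : ℤ) ∣ εq.num := by
        intro hc
        have hc' : p ∣ εq.num.natAbs := Int.natCast_dvd.mp hc
        have hco : Nat.gcd εq.num.natAbs εq.den = 1 := εq.reduced
        have : p ∣ Nat.gcd εq.num.natAbs εq.den := Nat.dvd_gcd hc' hpd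
        rw [hco] at this
        exact hp.one_lt.ne' (Nat.dvd_one.mp this)
      exact (hpint.dvd_mul.mp h2).resolve_left hcop
    set c : ℕ → ℤ := fun j => if (p : ℤ) ∣ k j then a j else b j with hc
    set m : ℕ → ℤ := fun j => if (p : ℤ) ∣ k j then k j else l j with hm
    have hchoice : ∀ i, 1 ≤ i → i ≤ N → (c i, m i) = (a i, k i) ∨ (c i, m i) = (b i, l i) := by
      intro i _ _
      by_cases h : (p : ℤ) ∣ k i
      · left; simp [hc, hm, h]
      · right; simp [hc, hm, h]
    have hg := hfree c m hchoice
    have hmdvd : ∀ i, 1 ≤ i → i ≤ N → (p : ℤ) ∣ m i := by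
      intro i hi1 hiN
      by_cases h : (p : ℤ) ∣ k i
      · simpa [hm, h] using h
      · have := (hpint.dvd_mul.mp (hpk i hi1 hiN)).resolve_left h
        simpa [hm, h] using this
    have hdvd : (p : ℤ) ∣ Finset.gcd
        (((Finset.Icc 1 N) ×ˢ (Finset.Icc 1 N)).filter (fun p : ℕ × ℕ => p.1 < p.2))
        (fun p => c p.1 * m p.2 - c p.2 * m p.1) := by
      apply Finset.dvd_gcd
      intro q hq
      simp only [Finset.mem_filter, Finset.mem_product, Finset.mem_Icc] at hq
      exact dvd_sub ((hmdvd q.2 hq.1.2.1 hq.1.2.2).mul_left _)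
        ((hmdvd q.1 hq.1.1.1 hq.1.1.2).mul_left _)
    rw [hg] at hdvd
    have : (p : ℤ) ≤ 1 := Int.le_of_dvd one_pos hdvd
    have h2 : 2 ≤ p := hp.two_le
    omega
  -- Step 7: integer identity with r := εq.num
  have hint2 : ∀ j, 1 ≤ j → j ≤ N →
      (b 1 * k j - l 1 * a j) * (b 1 * l j - l 1 * b j) = εq.num * (k j * l j) := by
    intro j hj1 hjN
    have := hint j hj1 hjN
    rwa [hs1, Nat.cast_one, one_mul] at this
  -- Step 8: εq.num = ±1
  have hr : εq.num.natAbs = 1 := by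
    by_contra hrne
    obtain ⟨p, hp, hpdvd⟩ : ∃ p, Nat.Prime p ∧ ∀ j, 1 ≤ j → j ≤ N →
        (p : ℤ) ∣ (b 1 * k j - l 1 * a j) * (b 1 * l j - l 1 * b j) := by
      rcases eq_or_ne εq.num 0 with h0 | h0
      · exact ⟨2, Nat.prime_two, fun j hj1 hjN => by
          rw [hint2 j hj1 hjN, h0, zero_mul]; exact dvd_zero _⟩
      · obtain ⟨p, hp, hpd⟩ := Nat.exists_prime_and_dvd hrne
        have hpr : (p : ℤ) ∣ εq.num := by
          rw [Int.natCast_dvd]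
          exact hpd
        exact ⟨p, hp, fun j hj1 hjN => by
          rw [hint2 j hj1 hjN]; exact hpr.mul_right _⟩
    have hpint : Prime (p : ℤ) := Nat.prime_iff_prime_int.mp hp
    set c : ℕ → ℤ := fun j => if j = 1 then b 1 else
      (if (p : ℤ) ∣ (b 1 * k j - l 1 * a j) then a j else b j) with hc
    set m : ℕ → ℤ := fun j => if j = 1 then l 1 else
      (if (p : ℤ) ∣ (b 1 * k j - l 1 * a j) then k j else l j) with hm
    have hchoice : ∀ i, 1 ≤ i → i ≤ N → (c i, m i) = (a i, k i) ∨ (c i, m i) = (b i, l i) := by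
      intro i _ _
      by_cases h1' : i = 1
      · right; simp [hc, hm, h1']
      · by_cases h : (p : ℤ) ∣ (b 1 * k i - l 1 * a i)
        · left; simp [hc, hm, h1', h]
        · right; simp [hc, hm, h1', h]
    have hg := hfree c m hchoice
    have hD : ∀ i, 1 ≤ i → i ≤ N → (p : ℤ) ∣ (b 1 * m i - l 1 * c i) := by
      intro i hi1 hiN
      by_cases h1' : i = 1
      · subst h1'
        simp only [hc, hm, if_pos rfl]
        rw [mul_comm (b 1) (l 1)]
        simp
      · by_cases h : (p : ℤ) ∣ (b 1 * k i - l 1 * a i)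
        · simpa [hc, hm, h1', h] using h
        · have := (hpint.dvd_mul.mp (hpdvd i hi1 hiN)).resolve_left h
          simpa [hc, hm, h1', h] using this
    have hdvd : (p : ℤ) ∣ Finset.gcd
        (((Finset.Icc 1 N) ×ˢ (Finset.Icc 1 N)).filter (fun p : ℕ × ℕ => p.1 < p.2))
        (fun p => c p.1 * m p.2 - c p.2 * m p.1) := by
      apply Finset.dvd_gcd
      intro q hq
      simp only [Finset.mem_filter, Finset.mem_product, Finset.mem_Icc] at hq
      have hDi := hD q.1 hq.1.1.1 hq.1.1.2
      have hDj := hD q.2 hq.1.2.1 hq.1.2.2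
      rcases hb_or p hp with hb | hl
      · have he : b 1 * (c q.1 * m q.2 - c q.2 * m q.1)
            = c q.1 * (b 1 * m q.2 - l 1 * c q.2) - c q.2 * (b 1 * m q.1 - l 1 * c q.1) := by
          ring
        have : (p : ℤ) ∣ b 1 * (c q.1 * m q.2 - c q.2 * m q.1) := by
          rw [he]; exact dvd_sub (hDj.mul_left _) (hDi.mul_left _)
        exact (hpint.dvd_mul.mp this).resolve_left hb
      · have he : l 1 * (c q.1 * m q.2 - c q.2 * m q.1)
            = m q.1 * (b 1 * m q.2 - l 1 * c q.2) - m q.2 * (b 1 * m q.1 - l 1 * c q.1) := by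
          ring
        have : (p : ℤ) ∣ l 1 * (c q.1 * m q.2 - c q.2 * m q.1) := by
          rw [he]; exact dvd_sub (hDj.mul_left _) (hDi.mul_left _)
        exact (hpint.dvd_mul.mp this).resolve_left hl
    rw [hg] at hdvd
    have : (p : ℤ) ≤ 1 := Int.le_of_dvd one_pos hdvd
    have h2 : 2 ≤ p := hp.two_le
    omega
  refine ⟨εq.num, ?_, ?_⟩
  · rcases Int.natAbs_eq_iff.mp hr with h | h
    · left; exact_mod_cast h
    · right; exact_mod_cast h
  · intro j hj2 hjN
    exact hint2 j (by omega) hjN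
end

section
/- Consider the relative model (ℚ[u] ⊗ Λ(x₁, ..., x_m, y), D) with deg u = 2, deg x_i = 3, deg y = 5, D(u) = 0, D(x_i) = λ_i u² and D(y) = α u³. If all λ_i = 0 and α = 0 then the cohomology H*(ℚ[u] ⊗ Λ(x₁,...,x_m,y), D) is infinite dimensional. If some λ_i ≠ 0, then after a change of generators the algebra is isomorphic (as a cdga) to (Λ(u, x̄₁) with Dx̄₁ = u²) ⊗ (Λ(x̄₂,...,x̄_m, ȳ), 0), the minimal model of S² × S⁵ × ∏_{i=1}^{m-1} S³. If all λ_i = 0 and α ≠ 0, the algebra is isomorphic to (Λ(u, ȳ) with Dȳ = u³) ⊗ (Λ(x₁,...,x_m), 0), the minimal model of ℂP² × ∏_{i=1}^m S³. -/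
set_option synthInstance.maxHeartbeats 1000000
set_option maxHeartbeats 2000000

open scoped TensorProduct

/-- The grade involution of the exterior algebra (identity in even degrees,
minus the identity in odd degrees), used to state the graded Leibniz rule. -/
noncomputable def gradeInv (W : Type*) [AddCommGroup W] [Module ℚ W] :
    ExteriorAlgebra ℚ W →ₐ[ℚ] ExteriorAlgebra ℚ W :=
  ExteriorAlgebra.lift ℚ ⟨-(ExteriorAlgebra.ι ℚ), fun m => by
    simp [ExteriorAlgebra.ι_sq_zero]⟩

/-- The grade involution of the free graded-commutative algebra
`ℚ[u] ⊗ Λ(W)` (with `u` of even degree and `W` in odd degrees). -/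
noncomputable def grE (W : Type*) [AddCommGroup W] [Module ℚ W] :
    (Polynomial ℚ ⊗[ℚ] ExteriorAlgebra ℚ W) →ₐ[ℚ]
      (Polynomial ℚ ⊗[ℚ] ExteriorAlgebra ℚ W) :=
  Algebra.TensorProduct.map (AlgHom.id ℚ (Polynomial ℚ)) (gradeInv W)


namespace Stmt16Aux

variable {m : ℕ}

abbrev VV (m : ℕ) := (Fin m → ℚ) × ℚ
abbrev AA (m : ℕ) := Polynomial ℚ ⊗[ℚ] ExteriorAlgebra ℚ (VV m)

lemma commLeft (p : Polynomial ℚ) (z : AA m) : Commute (p ⊗ₜ (1 : ExteriorAlgebra ℚ (VV m))) z := by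
  induction z using TensorProduct.induction_on with
  | zero => exact Commute.zero_right _
  | tmul q b =>
    show _ = _
    simp [Algebra.TensorProduct.tmul_mul_tmul, mul_comm]
  | add x y hx hy => exact hx.add_right hy

/-- the linear map underlying the change of generators -/
noncomputable def fmap (L : VV m →ₗ[ℚ] VV m) (c : ℚ) (u0 : Fin m → ℚ) :
    VV m →ₗ[ℚ] AA m where
  toFun v := (1 : Polynomial ℚ) ⊗ₜ ExteriorAlgebra.ι ℚ (L v)
    + (c * v.2) • ((Polynomial.X : Polynomial ℚ) ⊗ₜ ExteriorAlgebra.ι ℚ ((u0, 0) : VV m))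
  map_add' v w := by
    simp only [map_add, TensorProduct.tmul_add, Prod.snd_add]
    rw [mul_add, add_smul]
    abel
  map_smul' a v := by
    simp only [map_smul, TensorProduct.tmul_smul, Prod.smul_snd, smul_eq_mul,
      RingHom.id_apply, smul_add, smul_smul]
    ring_nf

lemma fmap_sq (L : VV m →ₗ[ℚ] VV m) (c : ℚ) (u0 : Fin m → ℚ) (v : VV m) :
    fmap L c u0 v * fmap L c u0 v = 0 := by
  have hv : fmap L c u0 v = (1 : Polynomial ℚ) ⊗ₜ ExteriorAlgebra.ι ℚ (L v)
      + (c * v.2) • ((Polynomial.X : Polynomial ℚ) ⊗ₜ ExteriorAlgebra.ι ℚ ((u0, 0) : VV m)) := rfl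
  rw [hv]
  rw [add_mul, mul_add, mul_add, smul_mul_assoc, smul_mul_assoc, mul_smul_comm, mul_smul_comm]
  simp only [Algebra.TensorProduct.tmul_mul_tmul, one_mul, mul_one,
    ExteriorAlgebra.ι_sq_zero, TensorProduct.tmul_zero, smul_zero, add_zero, zero_add]
  rw [← smul_add, ← TensorProduct.tmul_add]
  simp [ExteriorAlgebra.ι_add_mul_swap]

/-- the change-of-generators algebra endomorphism -/
noncomputable def fhom (L : VV m →ₗ[ℚ] VV m) (c : ℚ) (u0 : Fin m → ℚ) :
    AA m →ₐ[ℚ] AA m :=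
  Algebra.TensorProduct.lift Algebra.TensorProduct.includeLeft
    (ExteriorAlgebra.lift ℚ ⟨fmap L c u0, fmap_sq L c u0⟩)
    (fun p z => by simpa using commLeft p _)

@[simp] lemma fhom_tmul_one (L : VV m →ₗ[ℚ] VV m) (c : ℚ) (u0 : Fin m → ℚ) (p : Polynomial ℚ) :
    fhom L c u0 (p ⊗ₜ 1) = p ⊗ₜ 1 := by
  rw [fhom, Algebra.TensorProduct.lift_tmul]
  simp

@[simp] lemma fhom_iota (L : VV m →ₗ[ℚ] VV m) (c : ℚ) (u0 : Fin m → ℚ) (v : VV m) :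
    fhom L c u0 ((1 : Polynomial ℚ) ⊗ₜ ExteriorAlgebra.ι ℚ v)
      = (1 : Polynomial ℚ) ⊗ₜ ExteriorAlgebra.ι ℚ (L v)
        + (c * v.2) • ((Polynomial.X : Polynomial ℚ) ⊗ₜ ExteriorAlgebra.ι ℚ ((u0, 0) : VV m)) := by
  rw [fhom, Algebra.TensorProduct.lift_tmul]
  simp only [map_one, one_mul, ExteriorAlgebra.lift_ι_apply]
  rfl

lemma fhom_X_iota (L : VV m →ₗ[ℚ] VV m) (c : ℚ) (u0 : Fin m → ℚ) (v : VV m) :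
    fhom L c u0 ((Polynomial.X : Polynomial ℚ) ⊗ₜ ExteriorAlgebra.ι ℚ v)
      = ((Polynomial.X : Polynomial ℚ) ⊗ₜ (1:ExteriorAlgebra ℚ (VV m)))
        * fhom L c u0 ((1 : Polynomial ℚ) ⊗ₜ ExteriorAlgebra.ι ℚ v) := by
  have h : ((Polynomial.X : Polynomial ℚ) ⊗ₜ ExteriorAlgebra.ι ℚ v : AA m)
      = (((Polynomial.X : Polynomial ℚ) ⊗ₜ (1:ExteriorAlgebra ℚ (VV m)) : AA m))
        * (((1 : Polynomial ℚ) ⊗ₜ ExteriorAlgebra.ι ℚ v : AA m)) := by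
    rw [Algebra.TensorProduct.tmul_mul_tmul, mul_one, one_mul]
  rw [h, map_mul, fhom_tmul_one]

lemma algHom_ext {f g : AA m →ₐ[ℚ] AA m}
    (hX : f ((Polynomial.X : Polynomial ℚ) ⊗ₜ 1) = g ((Polynomial.X : Polynomial ℚ) ⊗ₜ 1))
    (hi : ∀ v : VV m, f ((1:Polynomial ℚ) ⊗ₜ ExteriorAlgebra.ι ℚ v)
      = g ((1:Polynomial ℚ) ⊗ₜ ExteriorAlgebra.ι ℚ v)) : f = g := by
  apply Algebra.TensorProduct.ext
  · apply Polynomial.algHom_ext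
    simpa using hX
  · apply ExteriorAlgebra.hom_ext
    apply LinearMap.ext
    intro v
    simpa using hi v

lemma fhom_comp (L L' : VV m →ₗ[ℚ] VV m) (c c' : ℚ) (u0 : Fin m → ℚ)
    (h1 : ∀ v, L' (L v) = v) (h3 : L' ((u0, 0) : VV m) = ((u0, 0) : VV m))
    (h5 : ∀ v : VV m, c' * (L v).2 + c * v.2 = 0) :
    (fhom L' c' u0).comp (fhom L c u0) = AlgHom.id ℚ (AA m) := by
  apply algHom_ext
  · simp
  · intro v
    simp only [AlgHom.comp_apply, AlgHom.id_apply, fhom_iota, map_add, map_smul,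
      fhom_X_iota, fhom_iota, h1, h3]
    rw [mul_zero, zero_smul, add_zero, Algebra.TensorProduct.tmul_mul_tmul, mul_one, one_mul]
    rw [add_assoc, ← add_smul, h5, zero_smul, add_zero]

/-- the change-of-generators algebra automorphism -/
noncomputable def fequiv (L L' : VV m →ₗ[ℚ] VV m) (c c' : ℚ) (u0 : Fin m → ℚ)
    (h1 : ∀ v, L' (L v) = v) (h2 : ∀ v, L (L' v) = v)
    (h3 : L' ((u0, 0) : VV m) = ((u0, 0) : VV m)) (h4 : L ((u0, 0) : VV m) = ((u0, 0) : VV m))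
    (h5 : ∀ v : VV m, c' * (L v).2 + c * v.2 = 0)
    (h6 : ∀ v : VV m, c * (L' v).2 + c' * v.2 = 0) :
    AA m ≃ₐ[ℚ] AA m :=
  AlgEquiv.ofAlgHom (fhom L c u0) (fhom L' c' u0)
    (fhom_comp L' L c' c u0 h2 h4 h6) (fhom_comp L L' c c' u0 h1 h3 h5)

@[simp] lemma fequiv_apply (L L' : VV m →ₗ[ℚ] VV m) (c c' : ℚ) (u0 : Fin m → ℚ)
    (h1 h2 h3 h4 h5 h6) (z : AA m) :
    fequiv L L' c c' u0 h1 h2 h3 h4 h5 h6 z = fhom L c u0 z := rfl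

lemma exists_basis (m : ℕ) (hm : 1 ≤ m) (lam : (Fin m → ℚ) →ₗ[ℚ] ℚ) (h : lam ≠ 0) :
    ∃ v : Module.Basis (Fin m) ℚ (Fin m → ℚ),
      lam (v ⟨0, hm⟩) = 1 ∧ ∀ i, i ≠ (⟨0, hm⟩ : Fin m) → lam (v i) = 0 := by
  obtain ⟨w0, hw0⟩ : ∃ w0, lam w0 ≠ 0 := by
    by_contra hc
    push_neg at hc
    exact h (LinearMap.ext fun w => by simpa using hc w)
  set v0 : Fin m → ℚ := (lam w0)⁻¹ • w0 with hv0
  have hlv0 : lam v0 = 1 := by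
    rw [hv0, map_smul, smul_eq_mul, inv_mul_cancel₀ hw0]
  have hsurj : Function.Surjective lam := fun c =>
    ⟨c • v0, by rw [map_smul, hlv0, smul_eq_mul, mul_one]⟩
  have hrank : Module.finrank ℚ (LinearMap.ker lam) = m - 1 := by
    have := LinearMap.finrank_range_add_finrank_ker lam
    rw [LinearMap.range_eq_top.mpr hsurj] at this
    simp [Module.finrank_fin_fun] at this
    omega
  have b : Module.Basis (Fin (m - 1)) ℚ (LinearMap.ker lam) :=
    Module.finBasisOfFinrankEq ℚ _ hrank
  have hli : ∀ (c : ℚ), ∀ x ∈ LinearMap.ker lam, c • v0 + x = 0 → c = 0 := by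
    intro c x hx hcx
    have := congrArg lam hcx
    rw [map_add, map_smul, hlv0, LinearMap.mem_ker.mp hx, map_zero] at this
    simpa using this
  have hsp : ∀ z : Fin m → ℚ, ∃ c : ℚ, z + c • v0 ∈ LinearMap.ker lam := by
    intro z
    exact ⟨-lam z, by simp [LinearMap.mem_ker, hlv0]⟩
  set bb : Module.Basis (Fin (m - 1 + 1)) ℚ (Fin m → ℚ) := Module.Basis.mkFinCons v0 b hli hsp with hbb
  have hcoe : (bb : Fin (m - 1 + 1) → (Fin m → ℚ))
      = Fin.cons v0 ((↑) ∘ b) := Module.Basis.coe_mkFinCons v0 b hli hsp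
  refine ⟨bb.reindex (finCongr (by omega)), ?_, ?_⟩
  · have : (bb.reindex (finCongr (by omega : m - 1 + 1 = m))) ⟨0, hm⟩
        = bb ((finCongr (by omega : m - 1 + 1 = m)).symm ⟨0, hm⟩) := Module.Basis.reindex_apply _ _ _
    rw [this]
    have h0 : (finCongr (by omega : m - 1 + 1 = m)).symm ⟨0, hm⟩ = (0 : Fin (m - 1 + 1)) := rfl
    rw [h0]
    have : bb 0 = v0 := by rw [show (bb 0 : Fin m → ℚ) = _ from congrFun hcoe 0, Fin.cons_zero]
    rw [this, hlv0]
  · intro i hi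
    rw [Module.Basis.reindex_apply]
    have hj0 : (finCongr (by omega : m - 1 + 1 = m)).symm i ≠ 0 := by
      intro hc
      apply hi
      have : i = (finCongr (by omega : m - 1 + 1 = m))
          ((finCongr (by omega : m - 1 + 1 = m)).symm i) := by simp
      rw [this, hc]
      rfl
    obtain ⟨k, hk⟩ : ∃ k : Fin (m - 1),
        (finCongr (by omega : m - 1 + 1 = m)).symm i = k.succ :=
      ⟨_, (Fin.succ_pred _ hj0).symm⟩
    rw [hk]
    have : bb k.succ = (b k : Fin m → ℚ) := by
      rw [show (bb k.succ : Fin m → ℚ) = _ from congrFun hcoe k.succ, Fin.cons_succ]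
      rfl
    rw [this]
    exact LinearMap.mem_ker.mp (b k).2


end Stmt16Aux

/-- Proposition 5.3: the relative model `(ℚ[u] ⊗ Λ(x₁,…,x_m,y), D)` with
`deg u = 2`, `deg xᵢ = 3`, `deg y = 5`, `D(u) = 0`, `D(xᵢ) = λᵢ u²`,
`D(y) = α u³` — realised as `ℚ[u] ⊗ Λ((ℚ^m) × ℚ)` with an antiderivation `D`,
the `x`-directions being `(w, 0)` and the `y`-direction `(0, 1)`.  If all
`λᵢ = 0` and `α = 0` then the cohomology is infinite dimensional.  If some
`λᵢ ≠ 0` (i.e. `lam ≠ 0`), then after a change of generators the differential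
takes the normal form `D(x̄₁) = u²`, `D(x̄ᵢ) = 0`, `D(ȳ) = 0`, the minimal
model of `S² × S⁵ × ∏_{i=1}^{m-1} S³`.  If `lam = 0` and `α ≠ 0`, it takes
the normal form `D(ȳ) = u³`, `D(xᵢ) = 0`, the minimal model of
`ℂP² × ∏_{i=1}^m S³`. -/
theorem stmt_16 (m : ℕ) (hm : 1 ≤ m) (lam : (Fin m → ℚ) →ₗ[ℚ] ℚ) (α : ℚ)
    (D : (Polynomial ℚ ⊗[ℚ] ExteriorAlgebra ℚ ((Fin m → ℚ) × ℚ)) →ₗ[ℚ]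
      (Polynomial ℚ ⊗[ℚ] ExteriorAlgebra ℚ ((Fin m → ℚ) × ℚ)))
    (hLeib : ∀ x y, D (x * y) = D x * y + grE ((Fin m → ℚ) × ℚ) x * D y)
    (hDu : D (Polynomial.X ⊗ₜ 1) = 0)
    (hDx : ∀ w : Fin m → ℚ,
      D (1 ⊗ₜ ExteriorAlgebra.ι ℚ (w, (0 : ℚ))) =
        lam w • ((Polynomial.X ^ 2) ⊗ₜ 1))
    (hDy : D (1 ⊗ₜ ExteriorAlgebra.ι ℚ ((0 : Fin m → ℚ), (1 : ℚ))) =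
      α • ((Polynomial.X ^ 3) ⊗ₜ 1)) :
    (lam = 0 → α = 0 →
      ¬ FiniteDimensional ℚ
        ↥((LinearMap.ker D).map (LinearMap.range D).mkQ)) ∧
    (lam ≠ 0 →
      ∃ (e : (Polynomial ℚ ⊗[ℚ] ExteriorAlgebra ℚ ((Fin m → ℚ) × ℚ)) ≃ₐ[ℚ]
          (Polynomial ℚ ⊗[ℚ] ExteriorAlgebra ℚ ((Fin m → ℚ) × ℚ)))
        (v : Module.Basis (Fin m) ℚ (Fin m → ℚ)),
        e (Polynomial.X ⊗ₜ 1) = Polynomial.X ⊗ₜ 1 ∧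
        D (e (1 ⊗ₜ ExteriorAlgebra.ι ℚ (v ⟨0, hm⟩, (0 : ℚ)))) =
          (Polynomial.X ^ 2) ⊗ₜ 1 ∧
        (∀ i : Fin m, i ≠ ⟨0, hm⟩ →
          D (e (1 ⊗ₜ ExteriorAlgebra.ι ℚ (v i, (0 : ℚ)))) = 0) ∧
        D (e (1 ⊗ₜ ExteriorAlgebra.ι ℚ ((0 : Fin m → ℚ), (1 : ℚ)))) = 0) ∧
    (lam = 0 → α ≠ 0 →
      ∃ e : (Polynomial ℚ ⊗[ℚ] ExteriorAlgebra ℚ ((Fin m → ℚ) × ℚ)) ≃ₐ[ℚ]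
          (Polynomial ℚ ⊗[ℚ] ExteriorAlgebra ℚ ((Fin m → ℚ) × ℚ)),
        e (Polynomial.X ⊗ₜ 1) = Polynomial.X ⊗ₜ 1 ∧
        (∀ w : Fin m → ℚ,
          D (e (1 ⊗ₜ ExteriorAlgebra.ι ℚ (w, (0 : ℚ)))) = 0) ∧
        D (e (1 ⊗ₜ ExteriorAlgebra.ι ℚ ((0 : Fin m → ℚ), (1 : ℚ)))) =
          (Polynomial.X ^ 3) ⊗ₜ 1) := by
  classical
  obtain ⟨hD1, hgrE_tmul_one, hDiotax, hDXi⟩ :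
      D 1 = 0 ∧
      (∀ p : Polynomial ℚ, grE ((Fin m → ℚ) × ℚ) (p ⊗ₜ 1) = p ⊗ₜ 1) ∧
      (∀ (w : Fin m → ℚ) (t : ℚ),
        D (1 ⊗ₜ ExteriorAlgebra.ι ℚ ((w, t) : (Fin m → ℚ) × ℚ))
          = lam w • ((Polynomial.X ^ 2) ⊗ₜ 1) + (t * α) • ((Polynomial.X ^ 3) ⊗ₜ 1)) ∧
      (∀ w : Fin m → ℚ,
        D ((Polynomial.X : Polynomial ℚ) ⊗ₜ ExteriorAlgebra.ι ℚ ((w, 0) : (Fin m → ℚ) × ℚ))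
          = lam w • ((Polynomial.X ^ 3) ⊗ₜ 1)) := by
    have hD1 : D 1 = 0 := by
      have h := hLeib 1 1
      have hg : grE ((Fin m → ℚ) × ℚ) 1 = 1 := map_one _
      rw [one_mul, mul_one, hg, one_mul] at h
      exact left_eq_add.mp h
    have hgr : ∀ p : Polynomial ℚ, grE ((Fin m → ℚ) × ℚ) (p ⊗ₜ 1) = p ⊗ₜ 1 := by
      intro p
      rw [grE, Algebra.TensorProduct.map_tmul, map_one, AlgHom.id_apply]
    have hio : ∀ (w : Fin m → ℚ) (t : ℚ),
        D (1 ⊗ₜ ExteriorAlgebra.ι ℚ ((w, t) : (Fin m → ℚ) × ℚ))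
          = lam w • ((Polynomial.X ^ 2) ⊗ₜ 1) + (t * α) • ((Polynomial.X ^ 3) ⊗ₜ 1) := by
      intro w t
      have hsplit : ((w, t) : (Fin m → ℚ) × ℚ)
          = ((w, 0) : (Fin m → ℚ) × ℚ) + t • (((0 : Fin m → ℚ), (1 : ℚ)) : (Fin m → ℚ) × ℚ) := by
        simp
      rw [hsplit, map_add, map_smul, TensorProduct.tmul_add, TensorProduct.tmul_smul,
        map_add, map_smul, hDx, hDy, smul_smul]
    refine ⟨hD1, hgr, hio, ?_⟩
    intro w
    have h : ((Polynomial.X : Polynomial ℚ)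
        ⊗ₜ ExteriorAlgebra.ι ℚ ((w, 0) : (Fin m → ℚ) × ℚ)
        : Polynomial ℚ ⊗[ℚ] ExteriorAlgebra ℚ ((Fin m → ℚ) × ℚ))
        = ((Polynomial.X : Polynomial ℚ) ⊗ₜ 1) * (1 ⊗ₜ ExteriorAlgebra.ι ℚ ((w, 0))) := by
      rw [Algebra.TensorProduct.tmul_mul_tmul, one_mul, mul_one]
    rw [h, hLeib, hDu, zero_mul, zero_add, hgr, hDx, mul_smul_comm,
      Algebra.TensorProduct.tmul_mul_tmul, one_mul,
      show (Polynomial.X : Polynomial ℚ) * Polynomial.X ^ 2 = Polynomial.X ^ 3 by ring]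
  refine ⟨?_, ?_, ?_⟩
  · -- Case 1 : lam = 0, α = 0
    intro hlam hα hfin
    have hDe : ∀ x : ExteriorAlgebra ℚ ((Fin m → ℚ) × ℚ), D (1 ⊗ₜ x) = 0 := by
      intro x
      induction x using ExteriorAlgebra.induction with
      | algebraMap r =>
        rw [Algebra.algebraMap_eq_smul_one, TensorProduct.tmul_smul, map_smul,
          show ((1 : Polynomial ℚ) ⊗ₜ (1 : ExteriorAlgebra ℚ ((Fin m → ℚ) × ℚ))) =
            (1 : Polynomial ℚ ⊗[ℚ] ExteriorAlgebra ℚ ((Fin m → ℚ) × ℚ)) from rfl,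
          hD1, smul_zero]
      | ι v =>
        obtain ⟨w, t⟩ := v
        rw [hDiotax, hlam, hα]
        simp
      | mul a b ha hb =>
        have h : ((1 : Polynomial ℚ) ⊗ₜ (a * b)
            : Polynomial ℚ ⊗[ℚ] ExteriorAlgebra ℚ ((Fin m → ℚ) × ℚ))
            = (1 ⊗ₜ a) * (1 ⊗ₜ b) := by
          rw [Algebra.TensorProduct.tmul_mul_tmul, one_mul]
        rw [h, hLeib, ha, hb, zero_mul, mul_zero, add_zero]
      | add a b ha hb =>
        rw [TensorProduct.tmul_add, map_add, ha, hb, add_zero]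
    have hDpoly : ∀ p : Polynomial ℚ, D (p ⊗ₜ 1) = 0 := by
      intro p
      induction p using Polynomial.induction_on with
      | C a =>
        rw [show (Polynomial.C a : Polynomial ℚ) = a • 1 by
            rw [← Polynomial.algebraMap_eq, Algebra.algebraMap_eq_smul_one],
          ← TensorProduct.smul_tmul',
          show ((1 : Polynomial ℚ) ⊗ₜ (1 : ExteriorAlgebra ℚ ((Fin m → ℚ) × ℚ))) =
            (1 : Polynomial ℚ ⊗[ℚ] ExteriorAlgebra ℚ ((Fin m → ℚ) × ℚ)) from rfl,
          map_smul, hD1, smul_zero]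
      | add p q hp hq =>
        rw [TensorProduct.add_tmul, map_add, hp, hq, add_zero]
      | monomial n a ih =>
        have h : ((Polynomial.C a * Polynomial.X ^ (n + 1) : Polynomial ℚ) ⊗ₜ 1
            : Polynomial ℚ ⊗[ℚ] ExteriorAlgebra ℚ ((Fin m → ℚ) × ℚ))
            = ((Polynomial.C a * Polynomial.X ^ n : Polynomial ℚ) ⊗ₜ 1)
              * ((Polynomial.X : Polynomial ℚ) ⊗ₜ 1) := by
          rw [Algebra.TensorProduct.tmul_mul_tmul, mul_one, pow_succ, mul_assoc]
        rw [h, hLeib, ih, zero_mul, hDu, mul_zero, add_zero]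
    have hDz : ∀ z : Polynomial ℚ ⊗[ℚ] ExteriorAlgebra ℚ ((Fin m → ℚ) × ℚ), D z = 0 := by
      intro z
      induction z using TensorProduct.induction_on with
      | zero => exact map_zero D
      | tmul p x =>
        have h : (p ⊗ₜ x : Polynomial ℚ ⊗[ℚ] ExteriorAlgebra ℚ ((Fin m → ℚ) × ℚ))
            = (p ⊗ₜ 1) * (1 ⊗ₜ x) := by
          rw [Algebra.TensorProduct.tmul_mul_tmul, one_mul, mul_one]
        rw [h, hLeib, hDpoly, hDe, zero_mul, mul_zero, add_zero]
      | add x y hx hy =>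
        rw [map_add, hx, hy, add_zero]
    have hD0 : D = 0 := LinearMap.ext fun z => (hDz z).trans (LinearMap.zero_apply z).symm
    rw [hD0, LinearMap.ker_zero, LinearMap.range_zero, Submodule.map_top,
      Submodule.range_mkQ] at hfin
    have h2 : FiniteDimensional ℚ
        ((Polynomial ℚ ⊗[ℚ] ExteriorAlgebra ℚ ((Fin m → ℚ) × ℚ))
          ⧸ (⊥ : Submodule ℚ (Polynomial ℚ ⊗[ℚ] ExteriorAlgebra ℚ ((Fin m → ℚ) × ℚ)))) :=
      Module.Finite.equiv (Submodule.topEquiv)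
    have h3 : FiniteDimensional ℚ (Polynomial ℚ ⊗[ℚ] ExteriorAlgebra ℚ ((Fin m → ℚ) × ℚ)) :=
      Module.Finite.equiv (Submodule.quotEquivOfEqBot ⊥ rfl)
    let F : (Polynomial ℚ ⊗[ℚ] ExteriorAlgebra ℚ ((Fin m → ℚ) × ℚ)) →ₐ[ℚ] Polynomial ℚ :=
      (Algebra.TensorProduct.rid ℚ ℚ (Polynomial ℚ)).toAlgHom.comp
        (Algebra.TensorProduct.map (AlgHom.id ℚ _) (ExteriorAlgebra.algebraMapInv))
    have hFsurj : Function.Surjective F := fun p =>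
      ⟨p ⊗ₜ 1, by simp [F, Algebra.TensorProduct.rid_tmul]⟩
    have := Module.Finite.of_surjective (R := ℚ) F.toLinearMap hFsurj
    exact Polynomial.not_finite this
  · -- Case 2 : lam ≠ 0
    intro hlam
    obtain ⟨v, hv1, hv0⟩ := Stmt16Aux.exists_basis m hm lam hlam
    refine ⟨Stmt16Aux.fequiv LinearMap.id LinearMap.id (-α) α (v ⟨0, hm⟩)
      (fun _ => rfl) (fun _ => rfl) rfl rfl
      (by intro w; simp) (by intro w; simp), v, ?_, ?_, ?_, ?_⟩
    · rw [Stmt16Aux.fequiv_apply, Stmt16Aux.fhom_tmul_one]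
    · rw [Stmt16Aux.fequiv_apply, Stmt16Aux.fhom_iota]
      simp only [LinearMap.id_coe, id_eq, mul_zero, zero_smul, add_zero]
      rw [hDx, hv1, one_smul]
    · intro i hi
      rw [Stmt16Aux.fequiv_apply, Stmt16Aux.fhom_iota]
      simp only [LinearMap.id_coe, id_eq, mul_zero, zero_smul, add_zero]
      rw [hDx, hv0 i hi, zero_smul]
    · rw [Stmt16Aux.fequiv_apply, Stmt16Aux.fhom_iota]
      simp only [LinearMap.id_coe, id_eq, mul_one]
      rw [map_add, map_smul, hDy, hDXi, hv1, one_smul, ← add_smul]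
      simp
  · -- Case 3 : lam = 0, α ≠ 0
    intro hlam hα
    set L : ((Fin m → ℚ) × ℚ) →ₗ[ℚ] ((Fin m → ℚ) × ℚ) :=
      LinearMap.prodMap LinearMap.id (α⁻¹ • LinearMap.id) with hL
    set L' : ((Fin m → ℚ) × ℚ) →ₗ[ℚ] ((Fin m → ℚ) × ℚ) :=
      LinearMap.prodMap LinearMap.id (α • LinearMap.id) with hL'
    have h1 : ∀ w : (Fin m → ℚ) × ℚ, L' (L w) = w := by
      intro w
      obtain ⟨a, b⟩ := w
      simp only [hL, hL', LinearMap.prodMap_apply, LinearMap.id_coe, id_eq,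
        LinearMap.smul_apply, smul_eq_mul, Prod.map_apply, Prod.mk.injEq]
      exact ⟨trivial, by field_simp⟩
    have h2 : ∀ w : (Fin m → ℚ) × ℚ, L (L' w) = w := by
      intro w
      obtain ⟨a, b⟩ := w
      simp only [hL, hL', LinearMap.prodMap_apply, LinearMap.id_coe, id_eq,
        LinearMap.smul_apply, smul_eq_mul, Prod.map_apply, Prod.mk.injEq]
      exact ⟨trivial, by field_simp⟩
    refine ⟨Stmt16Aux.fequiv L L' 0 0 0 h1 h2 (by simp [hL']) (by simp [hL])
      (by simp) (by simp), ?_, ?_, ?_⟩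
    · rw [Stmt16Aux.fequiv_apply, Stmt16Aux.fhom_tmul_one]
    · intro w
      rw [Stmt16Aux.fequiv_apply, Stmt16Aux.fhom_iota]
      simp only [zero_mul, zero_smul, add_zero]
      have hLw : L ((w, 0) : (Fin m → ℚ) × ℚ) = ((w, 0) : (Fin m → ℚ) × ℚ) := by
        simp [hL]
      rw [hLw, hDx, hlam]
      simp
    · rw [Stmt16Aux.fequiv_apply, Stmt16Aux.fhom_iota]
      simp only [zero_mul, zero_smul, add_zero]
      have hLy : L (((0 : Fin m → ℚ), (1 : ℚ)) : (Fin m → ℚ) × ℚ)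
          = (((0 : Fin m → ℚ), α⁻¹) : (Fin m → ℚ) × ℚ) := by
        simp [hL]
      rw [hLy, hDiotax, map_zero, zero_smul, zero_add, inv_mul_cancel₀ hα, one_smul]
end

section
/- For integers α, β, both nonzero, the commutative differential graded algebras (Λ(u₁, u₂, x₁, ..., x_{m+2}), d_α) and (Λ(u₁, u₂, x₁, ..., x_{m+2}), d_β) — where deg u_i = 2, deg x_j = 3, d(u_i) = 0, d(x₁) = u₁u₂, d(x₂) = u₁² + α u₂² (resp. u₁² + β u₂²), d(x_j) = 0 for j ≥ 3 — are isomorphic as cdgas if and only if there exists c ∈ ℚ with β = c²·α. -/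
set_option synthInstance.maxHeartbeats 1000000
set_option maxHeartbeats 2000000

open scoped TensorProduct

/-- The model of the free graded-commutative algebra
`Λ(u₁, u₂, x₁, …, x_{m+2})` with `deg uᵢ = 2`, `deg x_j = 3`:
`ℚ[u₁,u₂] ⊗ Λ(ℚ^{m+2})`. -/
abbrev E17 (m : ℕ) :=
  MvPolynomial (Fin 2) ℚ ⊗[ℚ] ExteriorAlgebra ℚ (Fin (m + 2) → ℚ)

/-- The grade involution of `E17 m`. -/
noncomputable def grE17 (m : ℕ) : E17 m →ₐ[ℚ] E17 m :=
  Algebra.TensorProduct.map (AlgHom.id ℚ (MvPolynomial (Fin 2) ℚ))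
    (gradeInv (Fin (m + 2) → ℚ))

/-- The span of the degree-2 generators `u₁, u₂` of `E17 m`. -/
noncomputable def deg2 (m : ℕ) : Submodule ℚ (E17 m) :=
  Submodule.span ℚ
    {(MvPolynomial.X 0 ⊗ₜ 1 : E17 m), (MvPolynomial.X 1 ⊗ₜ 1 : E17 m)}

/-- The span of the degree-3 generators `x₁, …, x_{m+2}` of `E17 m`. -/
noncomputable def deg3 (m : ℕ) : Submodule ℚ (E17 m) :=
  Submodule.span ℚ
    (Set.range fun w : Fin (m + 2) → ℚ =>
      ((1 : MvPolynomial (Fin 2) ℚ) ⊗ₜ ExteriorAlgebra.ι ℚ w : E17 m))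

namespace S17

open MvPolynomial

/-- the linear map `w ↦ 1 ⊗ ι w`. -/
noncomputable def T (m : ℕ) : (Fin (m + 2) → ℚ) →ₗ[ℚ] E17 m :=
  (TensorProduct.mk ℚ _ _ 1).comp (ExteriorAlgebra.ι ℚ)

@[simp] lemma T_apply (m : ℕ) (w : Fin (m + 2) → ℚ) :
    T m w = (1 : MvPolynomial (Fin 2) ℚ) ⊗ₜ ExteriorAlgebra.ι ℚ w := rfl

lemma deg3_eq (m : ℕ) : deg3 m = LinearMap.range (T m) := by
  rw [deg3]
  have : (fun w : Fin (m + 2) → ℚ =>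
      ((1 : MvPolynomial (Fin 2) ℚ) ⊗ₜ ExteriorAlgebra.ι ℚ w : E17 m)) = ⇑(T m) := rfl
  rw [this, ← LinearMap.coe_range, Submodule.span_eq]

/-- evaluation `E17 m → ℚ` at a point of `ℚ²`. -/
noncomputable def ψ (m : ℕ) (pt : Fin 2 → ℚ) : E17 m →ₐ[ℚ] ℚ :=
  Algebra.TensorProduct.lift (MvPolynomial.aeval pt) ExteriorAlgebra.algebraMapInv
    (fun _ _ => Commute.all _ _)

@[simp] lemma ψ_tmul (m : ℕ) (pt : Fin 2 → ℚ) (p : MvPolynomial (Fin 2) ℚ)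
    (x : ExteriorAlgebra ℚ (Fin (m + 2) → ℚ)) :
    ψ m pt (p ⊗ₜ x) = MvPolynomial.aeval pt p * ExteriorAlgebra.algebraMapInv x :=
  Algebra.TensorProduct.lift_tmul _ _ _ _ _

@[simp] lemma algebraMapInv_ι {W : Type*} [AddCommGroup W] [Module ℚ W] (w : W) :
    ExteriorAlgebra.algebraMapInv (ExteriorAlgebra.ι ℚ w) = 0 := by
  simp [ExteriorAlgebra.algebraMapInv]

end S17

namespace S17
open MvPolynomial

lemma pi_decomp {m : ℕ} (w : Fin (m + 2) → ℚ) :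
    w = ∑ j, w j • (Pi.single j (1 : ℚ) : Fin (m + 2) → ℚ) := by
  funext k
  simp [Finset.sum_apply, Pi.single_apply]

lemma D_T {m : ℕ} (D : E17 m →ₗ[ℚ] E17 m) (γ : ℚ)
    (h1 : D (T m (Pi.single 0 1)) = (X 0 * X 1) ⊗ₜ 1)
    (h2 : D (T m (Pi.single 1 1)) = (X 0 ^ 2 + C γ * X 1 ^ 2) ⊗ₜ 1)
    (h3 : ∀ j : Fin (m + 2), 2 ≤ (j : ℕ) → D (T m (Pi.single j 1)) = 0)
    (w : Fin (m + 2) → ℚ) :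
    D (T m w) = w 0 • ((X 0 * X 1) ⊗ₜ 1) + w 1 • ((X 0 ^ 2 + C γ * X 1 ^ 2) ⊗ₜ 1) := by
  have hw : D (T m w) = ∑ j, w j • D (T m (Pi.single j 1)) := by
    conv_lhs => rw [pi_decomp w]
    simp only [map_sum, map_smul]
  rw [hw, Fin.sum_univ_succ, Fin.sum_univ_succ]
  have hz : ∀ j : Fin m, D (T m (Pi.single j.succ.succ 1)) = 0 := by
    intro j
    apply h3
    simp [Fin.val_succ]
  simp only [hz, smul_zero, Finset.sum_const_zero, add_zero, Fin.succ_zero_eq_one]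
  rw [h1, h2]

end S17
namespace S17
open MvPolynomial

lemma deriv_eq {m : ℕ} (e : E17 m ≃ₐ[ℚ] E17 m) (L₁ L₂ : E17 m →ₗ[ℚ] E17 m)
    (h₁ : ∀ x y, L₁ (x * y) = L₁ x * e y + grE17 m (e x) * L₁ y)
    (h₂ : ∀ x y, L₂ (x * y) = L₂ x * e y + grE17 m (e x) * L₂ y)
    (hu : ∀ i : Fin 2, L₁ (X i ⊗ₜ 1) = L₂ (X i ⊗ₜ 1))
    (hx : ∀ w, L₁ (T m w) = L₂ (T m w)) :
    ∀ z, L₁ z = L₂ z := by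
  have hone : ∀ (L : E17 m →ₗ[ℚ] E17 m),
      (∀ x y, L (x * y) = L x * e y + grE17 m (e x) * L y) → L 1 = 0 := by
    intro L hL
    have h := hL 1 1
    rw [mul_one, map_one e, map_one (grE17 m), mul_one, one_mul] at h
    exact left_eq_add.mp h
  have hmul : ∀ x y, L₁ x = L₂ x → L₁ y = L₂ y → L₁ (x * y) = L₂ (x * y) := by
    intro x y hx hy
    rw [h₁, h₂, hx, hy]
  have key1 : ∀ p : MvPolynomial (Fin 2) ℚ,
      L₁ (p ⊗ₜ 1) = L₂ (p ⊗ₜ 1) := by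
    intro p
    induction p using MvPolynomial.induction_on with
    | C a =>
      have : (C a ⊗ₜ (1 : ExteriorAlgebra ℚ (Fin (m + 2) → ℚ)) : E17 m)
          = a • (1 : E17 m) := by
        simp [Algebra.TensorProduct.one_def, TensorProduct.smul_tmul',
          MvPolynomial.smul_eq_C_mul]
      rw [this, map_smul, map_smul, hone L₁ h₁, hone L₂ h₂]
    | add p q hp hq =>
      rw [TensorProduct.add_tmul, map_add, map_add, hp, hq]
    | mul_X p i hp =>
      have : ((p * X i) ⊗ₜ (1 : ExteriorAlgebra ℚ (Fin (m + 2) → ℚ)) : E17 m)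
          = (p ⊗ₜ 1) * (X i ⊗ₜ 1) := by
        rw [Algebra.TensorProduct.tmul_mul_tmul, mul_one]
      rw [this]
      exact hmul _ _ hp (hu i)
  have key2 : ∀ x : ExteriorAlgebra ℚ (Fin (m + 2) → ℚ),
      L₁ ((1 : MvPolynomial (Fin 2) ℚ) ⊗ₜ x) = L₂ (1 ⊗ₜ x) := by
    intro x
    induction x using ExteriorAlgebra.induction with
    | algebraMap r =>
      have : ((1 : MvPolynomial (Fin 2) ℚ) ⊗ₜ
          (algebraMap ℚ (ExteriorAlgebra ℚ (Fin (m + 2) → ℚ)) r) : E17 m)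
          = r • (1 : E17 m) := by
        rw [Algebra.TensorProduct.one_def, Algebra.algebraMap_eq_smul_one,
          TensorProduct.tmul_smul]
      rw [this, map_smul, map_smul, hone L₁ h₁, hone L₂ h₂]
    | ι w => exact hx w
    | mul a b ha hb =>
      have : ((1 : MvPolynomial (Fin 2) ℚ) ⊗ₜ (a * b) : E17 m)
          = (1 ⊗ₜ a) * (1 ⊗ₜ b) := by
        rw [Algebra.TensorProduct.tmul_mul_tmul, mul_one]
      rw [this]
      exact hmul _ _ ha hb
    | add a b ha hb =>
      rw [TensorProduct.tmul_add, map_add, map_add, ha, hb]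
  intro z
  induction z using TensorProduct.induction_on with
  | zero => simp
  | add x y hx hy => rw [map_add, map_add, hx, hy]
  | tmul p x =>
    have : (p ⊗ₜ x : E17 m) = (p ⊗ₜ 1) * (1 ⊗ₜ x) := by
      rw [Algebra.TensorProduct.tmul_mul_tmul, mul_one, one_mul]
    rw [this]
    exact hmul _ _ (key1 p) (key2 x)

end S17
namespace S17
open MvPolynomial

variable {m : ℕ}

/-- scaling of coordinate 0 by `c`. -/
noncomputable def sc (m : ℕ) (c : ℚ) : (Fin (m + 2) → ℚ) →ₗ[ℚ] (Fin (m + 2) → ℚ) :=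
  LinearMap.pi fun j => (if j = 0 then c else 1) • LinearMap.proj j

@[simp] lemma sc_apply (c : ℚ) (w : Fin (m + 2) → ℚ) (j : Fin (m + 2)) :
    sc m c w j = (if j = 0 then c else 1) * w j := rfl

lemma sc_comp (c : ℚ) (hc : c ≠ 0) : (sc m c).comp (sc m c⁻¹) = LinearMap.id := by
  ext w j
  by_cases h : j = 0 <;> simp [h, hc]

lemma sc_single_zero (c : ℚ) :
    sc m c (Pi.single 0 1) = c • (Pi.single 0 1 : Fin (m + 2) → ℚ) := by
  funext j
  by_cases h : j = 0 <;> simp [h, Pi.single_apply]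

lemma sc_single (c : ℚ) (j : Fin (m + 2)) (hj : j ≠ 0) :
    sc m c (Pi.single j 1) = Pi.single j 1 := by
  funext k
  by_cases h : k = 0
  · simp [h, Pi.single_apply, Ne.symm hj]
  · simp [h]

/-- the polynomial-side automorphism `X 0 ↦ X 0`, `X 1 ↦ c X 1`. -/
noncomputable def Pa (c : ℚ) : MvPolynomial (Fin 2) ℚ →ₐ[ℚ] MvPolynomial (Fin 2) ℚ :=
  aeval fun i : Fin 2 => if i = 0 then X 0 else C c * X 1

lemma Pa_comp (c : ℚ) (hc : c ≠ 0) : (Pa c).comp (Pa c⁻¹) = AlgHom.id ℚ _ := by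
  apply MvPolynomial.algHom_ext
  intro i
  fin_cases i <;> simp [Pa]
  rw [← mul_assoc, ← C_mul, inv_mul_cancel₀ hc, C_1, one_mul]

/-- the polynomial-side algebra equivalence. -/
noncomputable def Pe (c : ℚ) (hc : c ≠ 0) :
    MvPolynomial (Fin 2) ℚ ≃ₐ[ℚ] MvPolynomial (Fin 2) ℚ :=
  AlgEquiv.ofAlgHom (Pa c) (Pa c⁻¹) (Pa_comp c hc)
    (by simpa [inv_inv] using Pa_comp c⁻¹ (inv_ne_zero hc))

/-- the exterior-side algebra equivalence. -/
noncomputable def Qe (m : ℕ) (c : ℚ) (hc : c ≠ 0) :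
    ExteriorAlgebra ℚ (Fin (m + 2) → ℚ) ≃ₐ[ℚ] ExteriorAlgebra ℚ (Fin (m + 2) → ℚ) :=
  AlgEquiv.ofAlgHom (ExteriorAlgebra.map (sc m c)) (ExteriorAlgebra.map (sc m c⁻¹))
    (by rw [ExteriorAlgebra.map_comp_map, sc_comp c hc, ExteriorAlgebra.map_id])
    (by rw [ExteriorAlgebra.map_comp_map]
        rw [show (sc m c⁻¹).comp (sc m c) = LinearMap.id by
          simpa [inv_inv] using sc_comp (m := m) c⁻¹ (inv_ne_zero hc)]
        rw [ExteriorAlgebra.map_id])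

@[simp] lemma gradeInv_ι {W : Type*} [AddCommGroup W] [Module ℚ W] (w : W) :
    gradeInv W (ExteriorAlgebra.ι ℚ w) = -ExteriorAlgebra.ι ℚ w := by
  simp [gradeInv]

lemma gradeInv_map (c : ℚ) :
    (gradeInv _).comp (ExteriorAlgebra.map (sc m c))
      = (ExteriorAlgebra.map (sc m c)).comp (gradeInv _) := by
  apply ExteriorAlgebra.hom_ext
  apply LinearMap.ext
  intro w
  simp

end S17
namespace S17
open MvPolynomial

variable {m : ℕ}

/-- the automorphism of `E17 m`. -/
noncomputable def Ee (m : ℕ) (c : ℚ) (hc : c ≠ 0) : E17 m ≃ₐ[ℚ] E17 m :=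
  Algebra.TensorProduct.congr (Pe c hc) (Qe m c hc)

@[simp] lemma Ee_tmul (c : ℚ) (hc : c ≠ 0) (p : MvPolynomial (Fin 2) ℚ)
    (x : ExteriorAlgebra ℚ (Fin (m + 2) → ℚ)) :
    Ee m c hc (p ⊗ₜ x) = Pa c p ⊗ₜ ExteriorAlgebra.map (sc m c) x := by
  rw [Ee, Algebra.TensorProduct.congr_apply]
  exact Algebra.TensorProduct.map_tmul _ _ _ _

lemma Ee_gr (c : ℚ) (hc : c ≠ 0) (z : E17 m) :
    grE17 m (Ee m c hc z) = Ee m c hc (grE17 m z) := by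
  have key : (grE17 m).comp
        (Algebra.TensorProduct.map (Pa c) (ExteriorAlgebra.map (sc m c)))
      = (Algebra.TensorProduct.map (Pa c) (ExteriorAlgebra.map (sc m c))).comp
        (grE17 m) := by
    rw [grE17, ← Algebra.TensorProduct.map_comp, ← Algebra.TensorProduct.map_comp,
      gradeInv_map, AlgHom.comp_id, AlgHom.id_comp]
  have h1 : grE17 m (Ee m c hc z)
      = (grE17 m).comp
        (Algebra.TensorProduct.map (Pa c) (ExteriorAlgebra.map (sc m c))) z := by
    rw [Ee, Algebra.TensorProduct.congr_apply]; rfl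
  rw [h1, key]
  rw [Ee, Algebra.TensorProduct.congr_apply]
  rfl

end S17

open MvPolynomial

/-- The cdgas `(Λ(u₁,u₂,x₁,…,x_{m+2}), d_α)` and `(…, d_β)` — where
`d(uᵢ) = 0`, `d(x₁) = u₁u₂`, `d(x₂) = u₁² + α u₂²` (resp. `u₁² + β u₂²`),
`d(x_j) = 0` for `j ≥ 3` — are isomorphic as cdgas (via a degree-preserving
algebra isomorphism commuting with the differentials) if and only if there
exists `c ∈ ℚ` with `β = c² α`. -/
theorem stmt_17 (m : ℕ) (α β : ℤ) (hα : α ≠ 0) (hβ : β ≠ 0)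
    (Dα Dβ : E17 m →ₗ[ℚ] E17 m)
    (hLα : ∀ x y, Dα (x * y) = Dα x * y + grE17 m x * Dα y)
    (hLβ : ∀ x y, Dβ (x * y) = Dβ x * y + grE17 m x * Dβ y)
    (huα : ∀ i : Fin 2, Dα (MvPolynomial.X i ⊗ₜ 1) = 0)
    (huβ : ∀ i : Fin 2, Dβ (MvPolynomial.X i ⊗ₜ 1) = 0)
    (hx1α : Dα (1 ⊗ₜ ExteriorAlgebra.ι ℚ (Pi.single 0 1)) =
      (MvPolynomial.X 0 * MvPolynomial.X 1) ⊗ₜ 1)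
    (hx1β : Dβ (1 ⊗ₜ ExteriorAlgebra.ι ℚ (Pi.single 0 1)) =
      (MvPolynomial.X 0 * MvPolynomial.X 1) ⊗ₜ 1)
    (hx2α : Dα (1 ⊗ₜ ExteriorAlgebra.ι ℚ (Pi.single 1 1)) =
      (MvPolynomial.X 0 ^ 2 +
        MvPolynomial.C (α : ℚ) * MvPolynomial.X 1 ^ 2) ⊗ₜ 1)
    (hx2β : Dβ (1 ⊗ₜ ExteriorAlgebra.ι ℚ (Pi.single 1 1)) =
      (MvPolynomial.X 0 ^ 2 +
        MvPolynomial.C (β : ℚ) * MvPolynomial.X 1 ^ 2) ⊗ₜ 1)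
    (hxα : ∀ j : Fin (m + 2), 2 ≤ (j : ℕ) →
      Dα (1 ⊗ₜ ExteriorAlgebra.ι ℚ (Pi.single j 1)) = 0)
    (hxβ : ∀ j : Fin (m + 2), 2 ≤ (j : ℕ) →
      Dβ (1 ⊗ₜ ExteriorAlgebra.ι ℚ (Pi.single j 1)) = 0) :
    (∃ e : E17 m ≃ₐ[ℚ] E17 m,
      (∀ z ∈ deg2 m, e z ∈ deg2 m) ∧
      (∀ z ∈ deg3 m, e z ∈ deg3 m) ∧
      ∀ z, e (Dα z) = Dβ (e z)) ↔
    ∃ c : ℚ, (β : ℚ) = c ^ 2 * (α : ℚ) := by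
  have dα := S17.D_T Dα (α : ℚ) (by simpa using hx1α) (by simpa using hx2α)
    (fun j hj => by simpa using hxα j hj)
  have dβ := S17.D_T Dβ (β : ℚ) (by simpa using hx1β) (by simpa using hx2β)
    (fun j hj => by simpa using hxβ j hj)
  constructor
  · rintro ⟨e, he2, he3, hcomm⟩
    -- images of the degree-2 generators
    have hU0m : e ((X 0 : MvPolynomial (Fin 2) ℚ) ⊗ₜ 1) ∈ deg2 m :=
      he2 _ (Submodule.subset_span (Set.mem_insert _ _))
    have hU1m : e ((X 1 : MvPolynomial (Fin 2) ℚ) ⊗ₜ 1) ∈ deg2 m :=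
      he2 _ (Submodule.subset_span (Set.mem_insert_of_mem _ rfl))
    rw [deg2, Submodule.mem_span_pair] at hU0m hU1m
    obtain ⟨a, b, hab⟩ := hU0m
    obtain ⟨u, d, hud⟩ := hU1m
    -- images of x₁ and x₂
    have hx1m : e (1 ⊗ₜ ExteriorAlgebra.ι ℚ (Pi.single 0 1)) ∈ deg3 m :=
      he3 _ (by rw [S17.deg3_eq]; exact ⟨Pi.single 0 1, rfl⟩)
    have hx2m : e (1 ⊗ₜ ExteriorAlgebra.ι ℚ (Pi.single 1 1)) ∈ deg3 m :=
      he3 _ (by rw [S17.deg3_eq]; exact ⟨Pi.single 1 1, rfl⟩)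
    rw [S17.deg3_eq] at hx1m hx2m
    obtain ⟨w, hw⟩ := hx1m
    obtain ⟨v, hv⟩ := hx2m
    -- the first structure equation
    have E1 : (a • ((X 0 : MvPolynomial (Fin 2) ℚ) ⊗ₜ 1 : E17 m) + b • (X 1 ⊗ₜ 1)) *
        (u • ((X 0 : MvPolynomial (Fin 2) ℚ) ⊗ₜ 1) + d • (X 1 ⊗ₜ 1))
        = w 0 • (((X 0 * X 1 : MvPolynomial (Fin 2) ℚ)) ⊗ₜ 1)
          + w 1 • (((X 0 ^ 2 + C (β : ℚ) * X 1 ^ 2 : MvPolynomial (Fin 2) ℚ)) ⊗ₜ 1) := by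
      have h := hcomm (1 ⊗ₜ ExteriorAlgebra.ι ℚ (Pi.single 0 1))
      rw [hx1α] at h
      have hsplit : ((X 0 * X 1 : MvPolynomial (Fin 2) ℚ) ⊗ₜ
          (1 : ExteriorAlgebra ℚ (Fin (m + 2) → ℚ)) : E17 m)
          = (X 0 ⊗ₜ 1) * (X 1 ⊗ₜ 1) := by
        rw [Algebra.TensorProduct.tmul_mul_tmul, mul_one]
      rw [hsplit, map_mul, ← hab, ← hud, ← hw, dβ w] at h
      exact h
    -- the second structure equation
    have E2 : (a • ((X 0 : MvPolynomial (Fin 2) ℚ) ⊗ₜ 1 : E17 m) + b • (X 1 ⊗ₜ 1)) *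
        (a • ((X 0 : MvPolynomial (Fin 2) ℚ) ⊗ₜ 1) + b • (X 1 ⊗ₜ 1))
        + (α : ℚ) • ((u • ((X 0 : MvPolynomial (Fin 2) ℚ) ⊗ₜ 1 : E17 m) + d • (X 1 ⊗ₜ 1)) *
            (u • ((X 0 : MvPolynomial (Fin 2) ℚ) ⊗ₜ 1) + d • (X 1 ⊗ₜ 1)))
        = v 0 • (((X 0 * X 1 : MvPolynomial (Fin 2) ℚ)) ⊗ₜ 1)
          + v 1 • (((X 0 ^ 2 + C (β : ℚ) * X 1 ^ 2 : MvPolynomial (Fin 2) ℚ)) ⊗ₜ 1) := by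
      have h := hcomm (1 ⊗ₜ ExteriorAlgebra.ι ℚ (Pi.single 1 1))
      rw [hx2α] at h
      have hsplit : ((X 0 ^ 2 + C (α : ℚ) * X 1 ^ 2 : MvPolynomial (Fin 2) ℚ) ⊗ₜ
          (1 : ExteriorAlgebra ℚ (Fin (m + 2) → ℚ)) : E17 m)
          = (X 0 ⊗ₜ 1) * (X 0 ⊗ₜ 1)
            + (α : ℚ) • (((X 1 : MvPolynomial (Fin 2) ℚ) ⊗ₜ 1) * (X 1 ⊗ₜ 1)) := by
        rw [TensorProduct.add_tmul]
        congr 1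
        · rw [Algebra.TensorProduct.tmul_mul_tmul, mul_one, ← pow_two]
        · rw [Algebra.TensorProduct.tmul_mul_tmul, mul_one, ← pow_two,
            TensorProduct.smul_tmul', ← MvPolynomial.smul_eq_C_mul]
      rw [hsplit, map_add, map_mul, map_smul, map_mul, ← hab, ← hud, ← hv, dβ v] at h
      exact h
    -- evaluate at the points (1,0) and (0,1)
    have q1 := congrArg (S17.ψ m ![1, 0]) E1
    have q2 := congrArg (S17.ψ m ![0, 1]) E1
    have q3 := congrArg (S17.ψ m ![1, 0]) E2
    have q4 := congrArg (S17.ψ m ![0, 1]) E2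
    simp only [map_add, map_mul, map_smul, S17.ψ_tmul, aeval_X, map_one, map_pow,
      aeval_C, MvPolynomial.algebraMap_eq, Matrix.cons_val_zero, Matrix.cons_val_one,
      Matrix.head_cons, smul_eq_mul] at q1 q2 q3 q4
    norm_num at q1 q2 q3 q4
    -- the determinant is nonzero
    have hψ10 : ∀ s t : ℚ, s • ((X 0 : MvPolynomial (Fin 2) ℚ) ⊗ₜ 1 : E17 m)
        + t • (X 1 ⊗ₜ 1) = 0 → s = 0 ∧ t = 0 := by
      intro s t hst
      have h10 := congrArg (S17.ψ m ![1, 0]) hst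
      have h01 := congrArg (S17.ψ m ![0, 1]) hst
      simp only [map_add, map_smul, S17.ψ_tmul, aeval_X, map_one, map_zero,
        Matrix.cons_val_zero, Matrix.cons_val_one, Matrix.head_cons, smul_eq_mul] at h10 h01
      norm_num at h10 h01
      exact ⟨h10, h01⟩
    have hΔ : a * d - b * u ≠ 0 := by
      intro h0
      have h5 : e (d • ((X 0 : MvPolynomial (Fin 2) ℚ) ⊗ₜ 1 : E17 m) - b • (X 1 ⊗ₜ 1)) = 0 := by
        rw [map_sub, map_smul, map_smul, ← hab, ← hud]
        have : d • (a • ((X 0 : MvPolynomial (Fin 2) ℚ) ⊗ₜ 1 : E17 m) + b • (X 1 ⊗ₜ 1))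
            - b • (u • ((X 0 : MvPolynomial (Fin 2) ℚ) ⊗ₜ 1 : E17 m) + d • (X 1 ⊗ₜ 1))
            = (a * d - b * u) • ((X 0 : MvPolynomial (Fin 2) ℚ) ⊗ₜ 1 : E17 m)
              + (0 : ℚ) • (X 1 ⊗ₜ 1) := by
          module
        rw [this, h0, zero_smul, zero_smul, add_zero]
      have h6 : d • ((X 0 : MvPolynomial (Fin 2) ℚ) ⊗ₜ 1 : E17 m) - b • (X 1 ⊗ₜ 1) = 0 :=
        e.injective (by rw [h5, map_zero])
      have hbd := hψ10 d (-b) (by rw [← h6]; module)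
      have h7 : e ((-u) • ((X 0 : MvPolynomial (Fin 2) ℚ) ⊗ₜ 1 : E17 m) + a • (X 1 ⊗ₜ 1)) = 0 := by
        rw [map_add, map_smul, map_smul, ← hab, ← hud]
        have : (-u) • (a • ((X 0 : MvPolynomial (Fin 2) ℚ) ⊗ₜ 1 : E17 m) + b • (X 1 ⊗ₜ 1))
            + a • (u • ((X 0 : MvPolynomial (Fin 2) ℚ) ⊗ₜ 1 : E17 m) + d • (X 1 ⊗ₜ 1))
            = (0 : ℚ) • ((X 0 : MvPolynomial (Fin 2) ℚ) ⊗ₜ 1 : E17 m)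
              + (a * d - b * u) • (X 1 ⊗ₜ 1) := by
          module
        rw [this, h0, zero_smul, zero_smul, zero_add]
      have h8 : (-u) • ((X 0 : MvPolynomial (Fin 2) ℚ) ⊗ₜ 1 : E17 m) + a • (X 1 ⊗ₜ 1) = 0 :=
        e.injective (by rw [h7, map_zero])
      have hua := hψ10 (-u) a h8
      have h9 : e ((X 0 : MvPolynomial (Fin 2) ℚ) ⊗ₜ 1 : E17 m) = 0 := by
        rw [← hab, hua.2, neg_eq_zero.mp hbd.2, zero_smul, zero_smul, add_zero]
      have h10 : ((X 0 : MvPolynomial (Fin 2) ℚ) ⊗ₜ 1 : E17 m) = 0 :=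
        e.injective (by rw [h9, map_zero])
      have := hψ10 1 0 (by rw [one_smul, zero_smul, add_zero]; exact h10)
      exact one_ne_zero this.1
    -- the key algebraic identity
    have hR1 : b * d = (β : ℚ) * (a * u) := by rw [q2, ← q1]; ring
    have hR2 : b * b + (α : ℚ) * (d * d) = (β : ℚ) * (a * a + (α : ℚ) * (u * u)) := by
      rw [q4, ← q3]; ring
    have key : ((β : ℚ) * a ^ 2 - b ^ 2) ^ 2
        = (α : ℚ) * (β : ℚ) * (a * d - b * u) ^ 2 := by
      linear_combination (-(α : ℚ) * (b * d - (β : ℚ) * a * u)) * hR1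
        + (b ^ 2 - (β : ℚ) * a ^ 2) * hR2
    have hα' : (α : ℚ) ≠ 0 := Int.cast_ne_zero.mpr hα
    refine ⟨((β : ℚ) * a ^ 2 - b ^ 2) / ((α : ℚ) * (a * d - b * u)), ?_⟩
    have hD : (α : ℚ) * (a * d - b * u) ≠ 0 := mul_ne_zero hα' hΔ
    rw [div_pow, div_mul_eq_mul_div, eq_div_iff (pow_ne_zero 2 hD)]
    linear_combination (-(α : ℚ)) * key
  · rintro ⟨c, hc⟩
    have hc0 : c ≠ 0 := by
      intro h
      rw [h] at hc
      norm_num at hc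
      exact hβ (by exact_mod_cast hc)
    refine ⟨S17.Ee m c hc0, ?_, ?_, ?_⟩
    · intro z hz
      have hle : deg2 m ≤ (deg2 m).comap (S17.Ee m c hc0).toLinearMap := by
        rw [deg2, Submodule.span_le]
        intro y hy
        simp only [Set.mem_insert_iff, Set.mem_singleton_iff] at hy
        rcases hy with rfl | rfl
        · simp only [SetLike.mem_coe, Submodule.mem_comap, AlgEquiv.toLinearMap_apply,
            S17.Ee_tmul]
          have : S17.Pa c (X 0) = X 0 := by simp [S17.Pa]
          rw [this, map_one]
          exact Submodule.subset_span (Set.mem_insert _ _)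
        · simp only [SetLike.mem_coe, Submodule.mem_comap, AlgEquiv.toLinearMap_apply,
            S17.Ee_tmul]
          have h1 : S17.Pa c (X 1) = C c * X 1 := by simp [S17.Pa]
          rw [h1, map_one]
          have h2 : ((C c * X 1 : MvPolynomial (Fin 2) ℚ) ⊗ₜ
              (1 : ExteriorAlgebra ℚ (Fin (m + 2) → ℚ)) : E17 m)
              = c • ((X 1 : MvPolynomial (Fin 2) ℚ) ⊗ₜ 1) := by
            rw [TensorProduct.smul_tmul', ← MvPolynomial.smul_eq_C_mul]
          rw [h2]
          exact Submodule.smul_mem _ _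
            (Submodule.subset_span (Set.mem_insert_of_mem _ rfl))
      exact hle hz
    · intro z hz
      rw [S17.deg3_eq] at hz ⊢
      obtain ⟨w, rfl⟩ := hz
      refine ⟨S17.sc m c w, ?_⟩
      simp [S17.T_apply]
    · intro z
      have := S17.deriv_eq (S17.Ee m c hc0)
        ((S17.Ee m c hc0).toLinearMap.comp Dα)
        (Dβ.comp (S17.Ee m c hc0).toLinearMap)
        (fun x y => by
          simp only [LinearMap.comp_apply, AlgEquiv.toLinearMap_apply]
          rw [hLα, map_add, map_mul, map_mul, S17.Ee_gr])
        (fun x y => by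
          simp only [LinearMap.comp_apply, AlgEquiv.toLinearMap_apply]
          rw [map_mul]
          exact hLβ _ _)
        (fun i => by
          simp only [LinearMap.comp_apply, AlgEquiv.toLinearMap_apply]
          rw [huα i, map_zero, S17.Ee_tmul, map_one]
          fin_cases i
          · show (0 : E17 m) = Dβ (S17.Pa c (X 0) ⊗ₜ 1)
            have h0 : S17.Pa c (X (0 : Fin 2)) = X 0 := by simp [S17.Pa]
            rw [h0, huβ 0]
          · show (0 : E17 m) = Dβ (S17.Pa c (X 1) ⊗ₜ 1)
            have h1 : S17.Pa c (X (1 : Fin 2)) = C c * X 1 := by simp [S17.Pa]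
            have h2 : ((C c * X 1 : MvPolynomial (Fin 2) ℚ) ⊗ₜ
                (1 : ExteriorAlgebra ℚ (Fin (m + 2) → ℚ)) : E17 m)
                = c • ((X 1 : MvPolynomial (Fin 2) ℚ) ⊗ₜ 1) := by
              rw [TensorProduct.smul_tmul', ← MvPolynomial.smul_eq_C_mul]
            rw [h1, h2, map_smul, huβ 1, smul_zero])
        (fun w => by
          simp only [LinearMap.comp_apply, AlgEquiv.toLinearMap_apply]
          rw [dα w]
          have hTw : S17.Ee m c hc0 (S17.T m w) = S17.T m (S17.sc m c w) := by
            simp [S17.T_apply]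
          rw [hTw, dβ (S17.sc m c w), map_add, map_smul, map_smul]
          have hA : S17.Ee m c hc0 ((X 0 * X 1) ⊗ₜ 1)
              = c • (((X 0 * X 1 : MvPolynomial (Fin 2) ℚ)) ⊗ₜ
                  (1 : ExteriorAlgebra ℚ (Fin (m + 2) → ℚ)) : E17 m) := by
            rw [S17.Ee_tmul, map_one, TensorProduct.smul_tmul']
            congr 1
            rw [MvPolynomial.smul_eq_C_mul]
            simp only [S17.Pa, map_mul, aeval_X]
            norm_num
            try ring
          have hB : S17.Ee m c hc0 ((X 0 ^ 2 + C (α : ℚ) * X 1 ^ 2) ⊗ₜ 1)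
              = (((X 0 ^ 2 + C (β : ℚ) * X 1 ^ 2 : MvPolynomial (Fin 2) ℚ)) ⊗ₜ
                  (1 : ExteriorAlgebra ℚ (Fin (m + 2) → ℚ)) : E17 m) := by
            rw [S17.Ee_tmul, map_one]
            congr 1
            simp only [S17.Pa, map_add, map_mul, map_pow, aeval_X, aeval_C,
              MvPolynomial.algebraMap_eq]
            simp only [if_pos, if_neg, Fin.one_eq_zero_iff, OfNat.ofNat_ne_one,
              not_false_eq_true, ite_true, ite_false, reduceIte]
            rw [hc, C_mul, C_pow]
            ring
          rw [hA, hB, S17.sc_apply, S17.sc_apply]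
          norm_num [smul_smul]
          ring_nf
          try rfl)
        z
      simpa using this
end
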